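/- arXiv:1709.09893 — 7 statements merged into one kernel-verified Lean document; each statement's English description precedes it below -/
import Mathlib

section
/- Let H be a real (or complex) Hilbert space and let T : [0,∞) → (H →L H) be a strongly continuous semigroup of bounded linear operators (T(0) = Id, T(t+s) = T(t) ∘ T(s) for all t,s ≥ 0, and t ↦ T(t)x is continuous for every x ∈ H). Assume there exists T₀ > 0 with T(T₀) = 0, and let B be a bounded linear operator on H. Then there exist positive numbers ε₀, M, C such that for every ε ∈ (0, ε₀) and every u₀ ∈ H there is a unique continuous function u : [0,∞) → H satisfying the Duhamel equation u(t) = T(t)u₀ + ε ∫₀ᵗ T(t−s)(B u(s)) ds for all t ≥ 0, and this solution satisfies ‖u(t)‖ ≤ M · min(1, e^{−(C ln(1/ε)) t}/ε) · ‖u₀‖ for all t ≥ 0. -/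
/-!
Since `T t = T (t - T₀) ∘ T T₀ = 0` for `t ≥ T₀` and `‖T t‖ ≤ K` on `[0, T₀]` by Banach–Steinhaus,
the Duhamel integral at time `t` only sees `u` on the window `[t - T₀, t]`, and is bounded by
`K ‖B‖ T₀` times the supremum of `‖u‖` there. So for `ε K ‖B‖ T₀ < 1` the Duhamel map is a
contraction on bounded continuous functions in the plain sup norm (existence), and the same
estimate at a maximum point of `‖u - v‖` on `[0, τ]` gives uniqueness. For `t ≥ T₀` the free
term `T t u₀` vanishes, so the maximum of `‖u‖` on `[n T₀, (n + 1) T₀]` drops by a factor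
`√ε` from one window to the next, which is decay at rate `log ε⁻¹ / (2 T₀)`.
-/

open MeasureTheory Set BoundedContinuousFunction

theorem norm_intervalIntegral_le_of_eq_zero_of_le_sub {E : Type*} [NormedAddCommGroup E]
    [NormedSpace ℝ E] {f : ℝ → E} {a b L C : ℝ} (hab : a ≤ b) (hL : 0 ≤ L) (hC : 0 ≤ C)
    (hzero : ∀ s ∈ Ioc a b, s ≤ b - L → f s = 0)
    (hbound : ∀ s ∈ Ioc a b, b - L < s → ‖f s‖ ≤ C) :
    ‖∫ s in a..b, f s‖ ≤ C * L := by
  set c := max a (b - L)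
  have hac : a ≤ c := le_max_left _ _
  have hLc : b - L ≤ c := le_max_right _ _
  have hcb : c ≤ b := max_le hab (by linarith)
  have hcut : ∫ s in a..b, f s = ∫ s in c..b, f s := by
    rw [intervalIntegral.integral_of_le hab, intervalIntegral.integral_of_le hcb]
    refine setIntegral_eq_of_subset_of_forall_sdiff_eq_zero measurableSet_Ioc
      (Ioc_subset_Ioc_left hac) fun s ⟨hs, hsc⟩ => hzero s hs ?_
    have : s ≤ c := by by_contra! h; exact hsc ⟨h, hs.2⟩
    simpa [c, hs.1.not_ge] using this
  calc ‖∫ s in a..b, f s‖ ≤ C * |b - c| :=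
        hcut ▸ intervalIntegral.norm_integral_le_of_norm_le_const fun s hs => by
          rw [uIoc_of_le hcb] at hs
          exact hbound s ⟨hac.trans_lt hs.1, hs.2⟩ (hLc.trans_lt hs.1)
    _ ≤ C * L := by gcongr; rw [abs_of_nonneg (sub_nonneg.2 hcb)]; linarith

theorem le_of_forall_le_add_mul_max {f : ℝ → ℝ} {a b c q A : ℝ} (hab : a ≤ b)
    (hf : ContinuousOn f (Icc a b)) (hc : 0 ≤ c) (hq0 : 0 ≤ q) (hq : q < 1) (hA : 0 ≤ A)
    (h : ∀ t ∈ Icc a b, ∀ Q, A ≤ Q → (∀ s ∈ Icc a b, f s ≤ Q) → f t ≤ c + q * Q) :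
    ∀ t ∈ Icc a b, f t ≤ c / (1 - q) + q * A := by
  obtain ⟨p, hp, hmax⟩ := isCompact_Icc.exists_isMaxOn (nonempty_Icc.2 hab) hf
  have hfp := h p hp (max A (f p)) (le_max_left _ _) fun s hs => (hmax hs).trans (le_max_right _ _)
  have hc' : c ≤ c / (1 - q) := le_div_self hc (by linarith) (by linarith)
  intro t ht
  refine (hmax ht).trans ?_
  rcases le_total A (f p) with hAp | hpA
  · rw [max_eq_right hAp] at hfp
    have : f p ≤ c / (1 - q) := by rw [le_div_iff₀ (by linarith)]; linarith
    nlinarith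
  · rw [max_eq_left hpA] at hfp
    linarith

section OperatorFamily

variable {E : Type*} [NormedAddCommGroup E] [NormedSpace ℝ E] {T : ℝ → E →L[ℝ] E} {T₀ : ℝ}

theorem semigroup_eq_zero_of_le (hTadd : ∀ s t : ℝ, 0 ≤ s → 0 ≤ t → T (s + t) = (T s).comp (T t))
    (hT₀ : 0 ≤ T₀) (hnil : T T₀ = 0) {t : ℝ} (ht : T₀ ≤ t) : T t = 0 := by
  have h := hTadd (t - T₀) T₀ (sub_nonneg.2 ht) hT₀
  rwa [sub_add_cancel, hnil, ContinuousLinearMap.comp_zero] at h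

theorem exists_pos_forall_norm_le_of_eq_zero [CompleteSpace E]
    (hTcont : ∀ x, ContinuousOn (fun t => T t x) (Ici 0)) (hzero : ∀ t, T₀ ≤ t → T t = 0) :
    ∃ K, 0 < K ∧ ∀ t, 0 ≤ t → ‖T t‖ ≤ K := by
  obtain ⟨C, hC⟩ : ∃ C, ∀ t : Icc 0 T₀, ‖T t‖ ≤ C := banach_steinhaus fun x => by
    obtain ⟨C, hC⟩ := isCompact_Icc.exists_bound_of_continuousOn
      ((hTcont x).mono Icc_subset_Ici_self)
    exact ⟨C, fun t => hC t t.2⟩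
  refine ⟨max C 1, by positivity, fun t ht => ?_⟩
  rcases le_total t T₀ with htT | hTt
  · exact (hC ⟨t, ht, htT⟩).trans (le_max_left _ _)
  · rw [hzero t hTt, norm_zero]; positivity

theorem continuous_uncurry_of_forall_norm_le {S : ℝ → E →L[ℝ] E} {K : ℝ}
    (hS : ∀ x, Continuous fun t => S t x) (hK : ∀ t, ‖S t‖ ≤ K) :
    Continuous fun p : ℝ × E => S p.1 p.2 := by
  refine continuous_iff_continuousAt.2 fun ⟨a, x⟩ => ?_
  rw [ContinuousAt, tendsto_iff_dist_tendsto_zero]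
  have hlim : Filter.Tendsto (fun p : ℝ × E => K * dist p.2 x + dist (S p.1 x) (S a x))
      (nhds (a, x)) (nhds 0) := by
    have hc : Continuous fun p : ℝ × E => K * dist p.2 x + dist (S p.1 x) (S a x) := by
      have := hS x; fun_prop
    simpa using hc.tendsto (a, x)
  refine squeeze_zero (fun _ => dist_nonneg) (fun p => ?_) hlim
  calc dist (S p.1 p.2) (S a x) ≤ dist (S p.1 p.2) (S p.1 x) + dist (S p.1 x) (S a x) :=
        dist_triangle _ _ _
    _ ≤ K * dist p.2 x + dist (S p.1 x) (S a x) := by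
        gcongr
        rw [dist_eq_norm, dist_eq_norm, ← map_sub]
        exact (S p.1).le_of_opNorm_le (hK p.1) _

end OperatorFamily

section Duhamel

variable {E : Type*} [NormedAddCommGroup E] [NormedSpace ℝ E]

noncomputable def duhamel (T : ℝ → E →L[ℝ] E) (B : E →L[ℝ] E) (ε : ℝ) (u₀ : E) (u : ℝ → E)
    (t : ℝ) : E :=
  T t u₀ + ε • ∫ s in (0:ℝ)..t, T (t - s) (B (u s))

theorem duhamel_congr {S T : ℝ → E →L[ℝ] E} (hST : ∀ τ, 0 ≤ τ → S τ = T τ) (B : E →L[ℝ] E)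
    (ε : ℝ) (u₀ : E) (u : ℝ → E) {t : ℝ} (ht : 0 ≤ t) :
    duhamel S B ε u₀ u t = duhamel T B ε u₀ u t := by
  unfold duhamel
  rw [hST t ht, intervalIntegral.integral_congr fun s hs => ?_]
  rw [uIcc_of_le ht] at hs
  simp only [hST (t - s) (sub_nonneg.2 hs.2)]

variable {S : ℝ → E →L[ℝ] E} {B : E →L[ℝ] E} {K T₀ ε : ℝ}

theorem norm_duhamel_le (hK : ∀ t, ‖S t‖ ≤ K) (hzero : ∀ t, T₀ ≤ t → S t = 0) (hT₀ : 0 ≤ T₀)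
    (hε : 0 ≤ ε) (u₀ : E) {u : ℝ → E} {t Q : ℝ} (ht : 0 ≤ t) (hQ : 0 ≤ Q)
    (hu : ∀ s ∈ Ioc 0 t, t - T₀ < s → ‖u s‖ ≤ Q) :
    ‖duhamel S B ε u₀ u t‖ ≤ ‖S t u₀‖ + ε * (K * ‖B‖ * T₀) * Q := by
  have hK0 : 0 ≤ K := (norm_nonneg _).trans (hK 0)
  have hint : ‖∫ s in (0:ℝ)..t, S (t - s) (B (u s))‖ ≤ K * ‖B‖ * Q * T₀ := by
    refine norm_intervalIntegral_le_of_eq_zero_of_le_sub ht hT₀ (by positivity)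
      (fun s _ hs => ?_) fun s hs hts => ?_
    · rw [hzero (t - s) (by linarith), zero_apply]
    · calc ‖S (t - s) (B (u s))‖ ≤ ‖S (t - s)‖ * (‖B‖ * Q) :=
            (S _).le_opNorm_of_le (B.le_opNorm_of_le (hu s hs hts))
        _ ≤ K * ‖B‖ * Q := by rw [mul_assoc]; gcongr; exact hK _
  calc ‖duhamel S B ε u₀ u t‖ ≤ ‖S t u₀‖ + ε * ‖∫ s in (0:ℝ)..t, S (t - s) (B (u s))‖ := by
        unfold duhamel
        rw [← norm_smul_of_nonneg hε]
        exact norm_add_le _ _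
    _ ≤ ‖S t u₀‖ + ε * (K * ‖B‖ * T₀) * Q := by
        rw [mul_assoc]; gcongr; linarith

theorem intervalIntegrable_duhamel_integrand (hS : Continuous fun p : ℝ × E => S p.1 p.2)
    {u : ℝ → E} {t : ℝ} (ht : 0 ≤ t) (hu : ContinuousOn u (Icc 0 t)) :
    IntervalIntegrable (fun s => S (t - s) (B (u s))) volume 0 t := by
  refine ContinuousOn.intervalIntegrable ?_
  rw [uIcc_of_le ht]
  exact hS.comp_continuousOn ((continuousOn_const.sub continuousOn_id).prodMk
    (B.continuous.comp_continuousOn hu))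

theorem duhamel_sub_duhamel (hS : Continuous fun p : ℝ × E => S p.1 p.2) (u₀ : E)
    {u v : ℝ → E} {t : ℝ} (ht : 0 ≤ t) (hu : ContinuousOn u (Icc 0 t))
    (hv : ContinuousOn v (Icc 0 t)) :
    duhamel S B ε u₀ u t - duhamel S B ε u₀ v t = duhamel S B ε 0 (u - v) t := by
  simp only [duhamel, map_zero, zero_add, Pi.sub_apply, map_sub]
  rw [intervalIntegral.integral_sub (intervalIntegrable_duhamel_integrand hS ht hu)
    (intervalIntegrable_duhamel_integrand hS ht hv), smul_sub]
  abel

theorem norm_duhamel_sub_duhamel_le (hK : ∀ t, ‖S t‖ ≤ K) (hzero : ∀ t, T₀ ≤ t → S t = 0)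
    (hS : Continuous fun p : ℝ × E => S p.1 p.2) (hT₀ : 0 ≤ T₀) (hε : 0 ≤ ε) (u₀ : E)
    {u v : ℝ → E} {t Q : ℝ} (ht : 0 ≤ t) (hQ : 0 ≤ Q) (hu : ContinuousOn u (Icc 0 t))
    (hv : ContinuousOn v (Icc 0 t)) (huv : ∀ s ∈ Ioc 0 t, t - T₀ < s → ‖u s - v s‖ ≤ Q) :
    ‖duhamel S B ε u₀ u t - duhamel S B ε u₀ v t‖ ≤ ε * (K * ‖B‖ * T₀) * Q := by
  rw [duhamel_sub_duhamel hS u₀ ht hu hv]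
  simpa using norm_duhamel_le hK hzero hT₀ hε (B := B) (u := u - v) 0 ht hQ huv

theorem continuous_duhamel (hS : Continuous fun p : ℝ × E => S p.1 p.2) (u₀ : E) {u : ℝ → E}
    (hu : Continuous u) : Continuous (duhamel S B ε u₀ u) := by
  have hint : Continuous fun t => ∫ s in (0:ℝ)..t, S (t - s) (B (u s)) :=
    intervalIntegral.continuous_parametric_intervalIntegral_of_continuous
      (f := fun t s => S (t - s) (B (u s)))
      (hS.comp ((continuous_fst.sub continuous_snd).prodMk
        (B.continuous.comp (hu.comp continuous_snd)))) continuous_id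
  exact (hS.comp (continuous_id.prodMk continuous_const)).add (hint.const_smul ε)

theorem exists_continuous_eq_duhamel [CompleteSpace E] (hK : ∀ t, ‖S t‖ ≤ K)
    (hzero : ∀ t, T₀ ≤ t → S t = 0) (hS : Continuous fun p : ℝ × E => S p.1 p.2) (hT₀ : 0 ≤ T₀)
    (hε : 0 ≤ ε) (hq : ε * (K * ‖B‖ * T₀) < 1) (u₀ : E) :
    ∃ u : ℝ → E, Continuous u ∧ ∀ t, 0 ≤ t → u t = duhamel S B ε u₀ u t := by
  set q := ε * (K * ‖B‖ * T₀)
  have hq0 : 0 ≤ q := by have := (norm_nonneg _).trans (hK 0); positivity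
  -- Evaluating at `max t 0` makes `Φ v` a bounded continuous function on all of `ℝ`.
  let Φ : (ℝ →ᵇ E) → (ℝ →ᵇ E) := fun v =>
    .ofNormedAddCommGroup (fun t => duhamel S B ε u₀ v (max t 0))
      ((continuous_duhamel hS u₀ v.continuous).comp (continuous_id.max continuous_const))
      (K * ‖u₀‖ + q * ‖v‖) fun t =>
        (norm_duhamel_le hK hzero hT₀ hε u₀ (le_max_right t 0) (norm_nonneg v)
          fun s _ _ => v.norm_coe_le_norm s).trans
        (by gcongr; exact (S _).le_of_opNorm_le (hK _) _)
  have hΦ : ContractingWith ⟨q, hq0⟩ Φ := by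
    refine ⟨hq, LipschitzWith.of_dist_le_mul fun v w => ?_⟩
    refine (BoundedContinuousFunction.dist_le (by positivity)).2 fun t => ?_
    rw [dist_eq_norm]
    exact norm_duhamel_sub_duhamel_le hK hzero hS hT₀ hε u₀ (le_max_right t 0) dist_nonneg
      v.continuous.continuousOn w.continuous.continuousOn fun s _ _ =>
        dist_eq_norm (v s) (w s) ▸ v.dist_coe_le_dist s
  obtain ⟨v, hfix⟩ : ∃ v, Φ v = v := ⟨_, hΦ.fixedPoint_isFixedPt⟩
  refine ⟨v, v.continuous, fun t ht => ?_⟩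
  conv_lhs => rw [← hfix]
  simp [Φ, max_eq_left ht]

theorem eqOn_of_eq_duhamel (hK : ∀ t, ‖S t‖ ≤ K) (hzero : ∀ t, T₀ ≤ t → S t = 0)
    (hS : Continuous fun p : ℝ × E => S p.1 p.2) (hT₀ : 0 ≤ T₀) (hε : 0 ≤ ε)
    (hq : ε * (K * ‖B‖ * T₀) < 1) (u₀ : E) {u v : ℝ → E}
    (hu : ContinuousOn u (Ici 0)) (hue : ∀ t, 0 ≤ t → u t = duhamel S B ε u₀ u t)
    (hv : ContinuousOn v (Ici 0)) (hve : ∀ t, 0 ≤ t → v t = duhamel S B ε u₀ v t) :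
    EqOn u v (Ici 0) := by
  have hq0 : 0 ≤ ε * (K * ‖B‖ * T₀) := by have := (norm_nonneg _).trans (hK 0); positivity
  intro τ (hτ : 0 ≤ τ)
  have hdiff : ContinuousOn (fun t => ‖u t - v t‖) (Icc 0 τ) :=
    ((hu.sub hv).mono Icc_subset_Ici_self).norm
  have hbound := le_of_forall_le_add_mul_max hτ hdiff le_rfl hq0 hq le_rfl (fun t ht Q hQ hQbd => by
    rw [hue t ht.1, hve t ht.1, zero_add]
    exact norm_duhamel_sub_duhamel_le hK hzero hS hT₀ hε u₀ ht.1 hQ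
      (hu.mono (Icc_subset_Ici_self.trans' (Icc_subset_Icc_right ht.2)))
      (hv.mono (Icc_subset_Ici_self.trans' (Icc_subset_Icc_right ht.2)))
      fun s hs _ => hQbd s ⟨hs.1.le, hs.2.trans ht.2⟩) τ ⟨hτ, le_rfl⟩
  simpa [sub_eq_zero] using hbound

theorem norm_le_pow_of_eq_duhamel (hK : ∀ t, ‖S t‖ ≤ K) (hzero : ∀ t, T₀ ≤ t → S t = 0)
    (hT₀ : 0 < T₀) (hε : 0 ≤ ε) {r : ℝ} (hqr : ε * (K * ‖B‖ * T₀) ≤ r) (hr : r ≤ 1 / 2)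
    (u₀ : E) {u : ℝ → E} (hu : ContinuousOn u (Ici 0))
    (hue : ∀ t, 0 ≤ t → u t = duhamel S B ε u₀ u t) (n : ℕ) :
    ∀ t ∈ Icc (n * T₀) ((n + 1) * T₀), ‖u t‖ ≤ r ^ n * (2 * K * ‖u₀‖) := by
  set q := ε * (K * ‖B‖ * T₀)
  have hK0 : 0 ≤ K := (norm_nonneg _).trans (hK 0)
  have hq0 : 0 ≤ q := by positivity
  have hcont : ∀ a b, 0 ≤ a → ContinuousOn (fun t => ‖u t‖) (Icc a b) :=
    fun a b ha => (hu.mono fun t ht => ha.trans ht.1).norm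
  have hstep : ∀ t, 0 ≤ t → ∀ Q, 0 ≤ Q → (∀ s ∈ Ioc 0 t, t - T₀ < s → ‖u s‖ ≤ Q) →
      ‖u t‖ ≤ ‖S t u₀‖ + q * Q := fun t ht Q hQ h =>
    hue t ht ▸ norm_duhamel_le hK hzero hT₀.le hε u₀ ht hQ h
  induction n with
  | zero =>
    intro t ht
    rw [Nat.cast_zero, zero_mul, zero_add, one_mul] at ht
    have h := le_of_forall_le_add_mul_max hT₀.le (hcont 0 T₀ le_rfl)
      (by positivity : 0 ≤ K * ‖u₀‖) hq0 (by linarith) le_rfl (fun t ht Q hQ hQbd =>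
        (hstep t ht.1 Q hQ fun s hs _ => hQbd s ⟨hs.1.le, hs.2.trans ht.2⟩).trans
          (by gcongr; exact (S t).le_of_opNorm_le (hK t) u₀)) t ht
    calc ‖u t‖ ≤ K * ‖u₀‖ / (1 - q) := by simpa using h
      _ ≤ 2 * K * ‖u₀‖ := by
        rw [div_le_iff₀ (by linarith)]
        nlinarith [mul_nonneg hK0 (norm_nonneg u₀)]
      _ = r ^ 0 * (2 * K * ‖u₀‖) := by ring
  | succ n ih =>
    intro t ht
    push_cast at ht
    have hA : 0 ≤ r ^ n * (2 * K * ‖u₀‖) := by have := hq0.trans hqr; positivity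
    have h := le_of_forall_le_add_mul_max (by nlinarith : (n + 1) * T₀ ≤ (n + 1 + 1) * T₀)
      (hcont _ _ (by positivity)) le_rfl hq0 (by linarith) hA (fun t ht Q hQ hQbd => by
        have ht0 : 0 ≤ t := le_trans (by positivity) ht.1
        have h := hstep t ht0 Q (hA.trans hQ) fun s hs hts => by
          rcases le_total s ((n + 1) * T₀) with hs' | hs'
          · exact (ih s ⟨by nlinarith [ht.1], hs'⟩).trans hQ
          · exact hQbd s ⟨hs', hs.2.trans ht.2⟩
        rwa [hzero t (by nlinarith [ht.1]), zero_apply, norm_zero] at h) t ht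
    calc ‖u t‖ ≤ q * (r ^ n * (2 * K * ‖u₀‖)) := by simpa using h
      _ ≤ r * (r ^ n * (2 * K * ‖u₀‖)) := by gcongr
      _ = r ^ (n + 1) * (2 * K * ‖u₀‖) := by ring

end Duhamel

theorem mul_le_sqrt_of_lt_inv_sq {ε L : ℝ} (hL : 0 ≤ L) (hε : 0 ≤ ε)
    (hεL : ε < ((2 + L) ^ 2)⁻¹) : ε * L ≤ √ε ∧ √ε ≤ 1 / 2 := by
  have hs : √ε * (2 + L) < 1 := by
    have h := Real.sqrt_lt_sqrt hε hεL
    rw [Real.sqrt_inv, Real.sqrt_sq (by positivity)] at h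
    rwa [← lt_div_iff₀ (by positivity), one_div]
  have hss := Real.mul_self_sqrt hε
  have h0 := Real.sqrt_nonneg ε
  constructor <;> nlinarith

theorem sqrt_pow_floor_le_min_exp {ε T₀ t : ℝ} (hε0 : 0 < ε) (hε1 : ε < 1) (hT₀ : 0 < T₀) :
    √ε ^ ⌊t / T₀⌋₊ ≤ min 1 (Real.exp (-((2 * T₀)⁻¹ * Real.log ε⁻¹) * t) / ε) := by
  set n := ⌊t / T₀⌋₊
  refine le_min (pow_le_one₀ (Real.sqrt_nonneg ε) (Real.sqrt_le_one.2 hε1.le)) ?_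
  have hlhs : √ε ^ n = Real.exp (n / 2 * Real.log ε) := by
    rw [Real.sqrt_eq_rpow, ← Real.rpow_natCast, ← Real.rpow_mul hε0.le,
      Real.rpow_def_of_pos hε0]
    ring_nf
  have hrhs : Real.exp (-((2 * T₀)⁻¹ * Real.log ε⁻¹) * t) / ε
      = Real.exp ((t / T₀ / 2 - 1) * Real.log ε) := by
    rw [Real.log_inv, sub_mul, one_mul, Real.exp_sub, Real.exp_log hε0]
    congr 2
    field_simp
  have hn : t / T₀ < n + 1 := Nat.lt_floor_add_one _
  have hlog : Real.log ε < 0 := Real.log_neg hε0 hε1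
  rw [hlhs, hrhs, Real.exp_le_exp]
  nlinarith

theorem stmt0_general
    {H : Type*} [NormedAddCommGroup H] [InnerProductSpace ℝ H] [CompleteSpace H]
    (T : ℝ → H →L[ℝ] H)
    (hTadd : ∀ s t : ℝ, 0 ≤ s → 0 ≤ t → T (s + t) = (T s).comp (T t))
    (hTcont : ∀ x : H, ContinuousOn (fun t => T t x) (Set.Ici 0))
    (T₀ : ℝ) (hT₀pos : 0 < T₀) (hnil : T T₀ = 0)
    (B : H →L[ℝ] H) :
    ∃ ε₀ M C : ℝ, 0 < ε₀ ∧ 0 < M ∧ 0 < C ∧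
      ∀ ε ∈ Set.Ioo (0:ℝ) ε₀, ∀ u₀ : H,
        (∃ u : ℝ → H, ContinuousOn u (Set.Ici 0) ∧
          (∀ t : ℝ, 0 ≤ t →
            u t = T t u₀ + ε • ∫ s in (0:ℝ)..t, T (t - s) (B (u s))) ∧
          (∀ t : ℝ, 0 ≤ t →
            ‖u t‖ ≤ M * min 1 (Real.exp (-(C * Real.log ε⁻¹) * t) / ε) * ‖u₀‖)) ∧
        (∀ u v : ℝ → H,
          ContinuousOn u (Set.Ici 0) →
          (∀ t : ℝ, 0 ≤ t →
            u t = T t u₀ + ε • ∫ s in (0:ℝ)..t, T (t - s) (B (u s))) →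
          ContinuousOn v (Set.Ici 0) →
          (∀ t : ℝ, 0 ≤ t →
            v t = T t u₀ + ε • ∫ s in (0:ℝ)..t, T (t - s) (B (v s))) →
          Set.EqOn u v (Set.Ici 0)) := by
  have hzero : ∀ t, T₀ ≤ t → T t = 0 := fun t => semigroup_eq_zero_of_le hTadd hT₀pos.le hnil
  obtain ⟨K, hKpos, hK⟩ := exists_pos_forall_norm_le_of_eq_zero hTcont hzero
  -- `S` extends `T` to `ℝ`, so that strong continuity on `[0, ∞)` becomes continuity on `ℝ`.
  set S : ℝ → H →L[ℝ] H := fun t => T (max t 0)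
  have hST : ∀ t, 0 ≤ t → S t = T t := fun t ht => congrArg T (max_eq_left ht)
  have hSK : ∀ t, ‖S t‖ ≤ K := fun t => hK _ (le_max_right t 0)
  have hS0 : ∀ t, T₀ ≤ t → S t = 0 := fun t ht => hzero _ (ht.trans (le_max_left t 0))
  have hS : Continuous fun p : ℝ × H => S p.1 p.2 := continuous_uncurry_of_forall_norm_le
    (fun x => (hTcont x).comp_continuous (continuous_id.max continuous_const)
      fun t => le_max_right t 0) hSK
  -- For `ε < ε₀` one window of length `T₀` contracts by `ε K ‖B‖ T₀ ≤ √ε ≤ 1/2`.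
  refine ⟨((2 + K * ‖B‖ * T₀) ^ 2)⁻¹, 2 * K, (2 * T₀)⁻¹, by positivity, by positivity,
    by positivity, fun ε ⟨hε0, hε⟩ u₀ => ?_⟩
  obtain ⟨hqr, hr⟩ := mul_le_sqrt_of_lt_inv_sq (by positivity) hε0.le hε
  have hq : ε * (K * ‖B‖ * T₀) < 1 := by linarith
  have hε1 : ε < 1 := by nlinarith [Real.mul_self_sqrt hε0.le, Real.sqrt_nonneg ε]
  have hsol : ∀ u : ℝ → H, (∀ t, 0 ≤ t → u t = duhamel S B ε u₀ u t) ↔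
      ∀ t, 0 ≤ t → u t = T t u₀ + ε • ∫ s in (0:ℝ)..t, T (t - s) (B (u s)) :=
    fun u => forall₂_congr fun t ht => by rw [duhamel_congr hST B ε u₀ u ht]; rfl
  obtain ⟨u, hu, hue⟩ := exists_continuous_eq_duhamel hSK hS0 hS hT₀pos.le hε0.le hq u₀
  refine ⟨⟨u, hu.continuousOn, (hsol u).1 hue, fun t ht => ?_⟩, fun u v hu hue hv hve =>
    eqOn_of_eq_duhamel hSK hS0 hS hT₀pos.le hε0.le hq u₀ hu ((hsol u).2 hue) hv ((hsol v).2 hve)⟩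
  have hn : t ∈ Icc (⌊t / T₀⌋₊ * T₀) ((⌊t / T₀⌋₊ + 1) * T₀) :=
    ⟨(le_div_iff₀ hT₀pos).1 (Nat.floor_le (by positivity)),
      ((div_lt_iff₀ hT₀pos).1 (Nat.lt_floor_add_one _)).le⟩
  calc ‖u t‖ ≤ √ε ^ ⌊t / T₀⌋₊ * (2 * K * ‖u₀‖) :=
        norm_le_pow_of_eq_duhamel hSK hS0 hT₀pos hε0.le hqr hr u₀ hu.continuousOn hue _ t hn
    _ ≤ min 1 (Real.exp (-((2 * T₀)⁻¹ * Real.log ε⁻¹) * t) / ε) * (2 * K * ‖u₀‖) := by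
        gcongr; exact sqrt_pow_floor_le_min_exp hε0 hε1 hT₀pos
    _ = 2 * K * min 1 (Real.exp (-((2 * T₀)⁻¹ * Real.log ε⁻¹) * t) / ε) * ‖u₀‖ := by ring

/-- If `(T t)` is a strongly continuous semigroup on a Hilbert space `H`
with `T T₀ = 0` for some `T₀ > 0`, and `B` is a bounded operator, then there are
`ε₀, M, C > 0` such that for every `ε ∈ (0, ε₀)` and every `u₀ ∈ H`, the Duhamel
(mild-solution) equation `u t = T t u₀ + ε ∫₀ᵗ T (t−s) (B (u s)) ds` has a unique
continuous solution on `[0,∞)`, and it satisfies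
`‖u t‖ ≤ M · min(1, e^{−(C ln ε⁻¹) t}/ε) · ‖u₀‖`. -/
theorem stmt0
    {H : Type*} [NormedAddCommGroup H] [InnerProductSpace ℝ H] [CompleteSpace H]
    (T : ℝ → H →L[ℝ] H)
    (hT0 : T 0 = ContinuousLinearMap.id ℝ H)
    (hTadd : ∀ s t : ℝ, 0 ≤ s → 0 ≤ t → T (s + t) = (T s).comp (T t))
    (hTcont : ∀ x : H, ContinuousOn (fun t => T t x) (Set.Ici 0))
    (T₀ : ℝ) (hT₀pos : 0 < T₀) (hnil : T T₀ = 0)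
    (B : H →L[ℝ] H) :
    ∃ ε₀ M C : ℝ, 0 < ε₀ ∧ 0 < M ∧ 0 < C ∧
      ∀ ε ∈ Set.Ioo (0:ℝ) ε₀, ∀ u₀ : H,
        (∃ u : ℝ → H, ContinuousOn u (Set.Ici 0) ∧
          (∀ t : ℝ, 0 ≤ t →
            u t = T t u₀ + ε • ∫ s in (0:ℝ)..t, T (t - s) (B (u s))) ∧
          (∀ t : ℝ, 0 ≤ t →
            ‖u t‖ ≤ M * min 1 (Real.exp (-(C * Real.log ε⁻¹) * t) / ε) * ‖u₀‖)) ∧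
        (∀ u v : ℝ → H,
          ContinuousOn u (Set.Ici 0) →
          (∀ t : ℝ, 0 ≤ t →
            u t = T t u₀ + ε • ∫ s in (0:ℝ)..t, T (t - s) (B (u s))) →
          ContinuousOn v (Set.Ici 0) →
          (∀ t : ℝ, 0 ≤ t →
            v t = T t u₀ + ε • ∫ s in (0:ℝ)..t, T (t - s) (B (v s))) →
          Set.EqOn u v (Set.Ici 0)) :=
  stmt0_general T hTadd hTcont T₀ hT₀pos hnil B
end

section
/- Let c, L > 0. For every κ > c/L there exists ε₀ > 0 such that for every ε ∈ (0, ε₀) there exist a real number λ with λ > −κ ln(1/ε) and continuously differentiable functions u, v : [0,L] → ℝ, not both identically zero, satisfying u(0) = v(L) = 0 and the spectral system λ u(x) + c u'(x) = ε v(x), λ v(x) − c v'(x) = ε u(x) for all x ∈ [0,L]. (In particular λ is a real eigenvalue of the operator A + εB where A(u,v) = (−c∂ₓu, c∂ₓv) with domain {(u,v) ∈ H¹(0,L)² : u(0)=v(L)=0} and B(u,v) = (v,u), which yields the lower bound ‖e^{t(A+εB)}‖ ≥ K e^{−(κ ln(1/ε)) t} for the associated semigroup.) -/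
/-!
For `μ > 0`, `u = sinh (μ x)` and `v = (lam u + c u') / ε` solve the system with `v L = 0`
exactly when `lam = -c μ coth (μ L)` and `ε sinh (μ L) = c μ`. As `ε → 0` the root `μ` of the
latter goes to infinity, with `log ε⁻¹ ≥ μ L - log (4 c μ)` while `|lam| ≤ c μ + ε`; since
`c < κ L`, the linear term wins and `lam > -κ log ε⁻¹`.
-/

open Real Set Filter Topology

namespace Real

theorem exp_div_four_le_sinh {t : ℝ} (ht : 1 ≤ t) : exp t / 4 ≤ sinh t := by
  have h1 : exp (-t) ≤ 1 := exp_le_one_iff.mpr (by linarith)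
  have h2 : 2 ≤ exp t := by linarith [add_one_le_exp t]
  rw [sinh_eq]
  linarith

theorem tendsto_sinh_div_self_atTop : Tendsto (fun t => sinh t / t) atTop atTop := by
  have hexp : Tendsto (fun t => exp t / t / 4) atTop atTop := by
    simpa using (tendsto_exp_div_pow_atTop 1).atTop_div_const (by norm_num : (0:ℝ) < 4)
  refine tendsto_atTop_mono' atTop ?_ hexp
  filter_upwards [eventually_ge_atTop 1] with t ht
  rw [div_div, mul_comm, ← div_div]
  gcongr
  exact exp_div_four_le_sinh ht

end Real

theorem mul_cosh_div_sinh_le {a ε s : ℝ} (hs : 0 < s) (hε : 0 ≤ ε) (h : ε * sinh s = a) :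
    a * cosh s / sinh s ≤ a + ε := by
  have hsinh : 0 < sinh s := sinh_pos_iff.mpr hs
  have hexp : exp (-s) ≤ 1 := exp_le_one_iff.mpr (neg_nonpos.mpr hs.le)
  calc a * cosh s / sinh s = a + ε * exp (-s) := by
        rw [← cosh_sub_sinh, ← h]; field_simp; ring
    _ ≤ a + ε := by nlinarith

theorem sub_log_le_log_inv {a ε s : ℝ} (hs : 1 ≤ s) (ha : 0 < a) (h : ε * sinh s = a) :
    s - log (4 * a) ≤ log ε⁻¹ := by
  have hε : ε⁻¹ = sinh s / a := by
    have hε0 : ε ≠ 0 := by rintro rfl; simp at h; linarith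
    rw [← h]; field_simp
  calc s - log (4 * a) = log (exp s / 4 / a) := by
        rw [log_div (by positivity) ha.ne', log_div (by positivity) (by norm_num), log_exp,
          log_mul (by norm_num) ha.ne']
        ring
    _ ≤ log ε⁻¹ := by
        rw [hε]
        gcongr
        exact exp_div_four_le_sinh hs

theorem eventually_mul_add_lt_mul_sub_mul_log {a b : ℝ} (hab : a < b) (d k : ℝ) :
    ∀ᶠ x in atTop, a * x + d < b * x - k * log x := by
  have hlog : Tendsto (fun x => log x / x) atTop (𝓝 0) := by
    simpa using isLittleO_log_id_atTop.tendsto_div_nhds_zero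
  have hinv : Tendsto (fun x : ℝ => x⁻¹) atTop (𝓝 0) := tendsto_inv_atTop_zero
  have hl : Tendsto (fun x => a + d * x⁻¹) atTop (𝓝 a) := by
    simpa using (hinv.const_mul d).const_add a
  have hr : Tendsto (fun x => b - k * (log x / x)) atTop (𝓝 b) := by
    simpa using (hlog.const_mul k).const_sub b
  filter_upwards [hl.eventually_lt hr hab, eventually_gt_atTop 0] with x hx hx0
  have := mul_lt_mul_of_pos_right hx hx0
  field_simp at this
  linarith

theorem exists_sinh_mul_div_eq {L M y : ℝ} (hL : 0 < L) (hM : 0 < M)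
    (hy : sinh (M * L) / M ≤ y) : ∃ μ, M ≤ μ ∧ sinh (μ * L) / μ = y := by
  have hcont : ContinuousOn (fun μ => sinh (μ * L) / μ) (Ici M) :=
    ContinuousOn.div (by fun_prop) continuousOn_id fun μ hμ => (hM.trans_le hμ).ne'
  have htop : Tendsto (fun μ => sinh (μ * L) / μ) atTop atTop := by
    have := (tendsto_sinh_div_self_atTop.comp (tendsto_id.atTop_mul_const hL)).const_mul_atTop hL
    refine this.congr' ?_
    filter_upwards [eventually_gt_atTop 0] with μ hμ
    simp only [Function.comp, id]
    field_simp
  exact intermediate_value_Ici hcont htop hy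

/-- `lam` is an eigenvalue of `A + εB`, where `A (u, v) = (-c u', c v')` on `u 0 = v L = 0` and
`B (u, v) = (v, u)`, with a `C¹` eigenfunction on `[0, L]`. -/
def HasEigenfunction (c L ε lam : ℝ) : Prop :=
  ∃ u v u' v' : ℝ → ℝ,
    ContinuousOn u' (Icc 0 L) ∧ ContinuousOn v' (Icc 0 L) ∧
    (∀ x ∈ Icc (0:ℝ) L, HasDerivAt u (u' x) x) ∧
    (∀ x ∈ Icc (0:ℝ) L, HasDerivAt v (v' x) x) ∧
    ¬ ((∀ x ∈ Icc (0:ℝ) L, u x = 0) ∧ (∀ x ∈ Icc (0:ℝ) L, v x = 0)) ∧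
    u 0 = 0 ∧ v L = 0 ∧
    (∀ x ∈ Icc (0:ℝ) L, lam * u x + c * u' x = ε * v x ∧ lam * v x - c * v' x = ε * u x)

theorem hasEigenfunction_of_mul_sinh_eq {c L ε μ : ℝ} (hL : 0 < L) (hμ : 0 < μ) (hε : ε ≠ 0)
    (h : ε * sinh (μ * L) = c * μ) :
    HasEigenfunction c L ε (-(c * μ * cosh (μ * L) / sinh (μ * L))) := by
  set s := μ * L with hs
  set lam := -(c * μ * cosh s / sinh s)
  have hsinh : 0 < sinh s := sinh_pos_iff.mpr (by positivity)
  have hlam_sinh : lam * sinh s + c * μ * cosh s = 0 := by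
    simp only [lam]; field_simp; ring
  -- With `v = (lam u + c u') / ε` and `u'' = μ² u`, the second equation is `lam² - c² μ² = ε²`.
  have hlam_sq : lam ^ 2 - c ^ 2 * μ ^ 2 = ε ^ 2 := by
    have h3 : (lam ^ 2 - c ^ 2 * μ ^ 2 - ε ^ 2) * sinh s ^ 2 = 0 := by
      linear_combination (lam * sinh s - c * μ * cosh s) * hlam_sinh
        - (ε * sinh s + c * μ) * h + c ^ 2 * μ ^ 2 * cosh_sq s
    linarith [(mul_eq_zero.mp h3).resolve_right (pow_ne_zero _ hsinh.ne')]
  have hsinh_deriv (x : ℝ) : HasDerivAt (fun x => sinh (μ * x)) (μ * cosh (μ * x)) x := by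
    simpa [mul_comm] using ((hasDerivAt_id x).const_mul μ).sinh
  have hcosh_deriv (x : ℝ) : HasDerivAt (fun x => cosh (μ * x)) (μ * sinh (μ * x)) x := by
    simpa [mul_comm] using ((hasDerivAt_id x).const_mul μ).cosh
  refine ⟨fun x => sinh (μ * x), fun x => (lam * sinh (μ * x) + c * μ * cosh (μ * x)) / ε,
    fun x => μ * cosh (μ * x), fun x => (lam * μ * cosh (μ * x) + c * μ ^ 2 * sinh (μ * x)) / ε,
    by fun_prop, by fun_prop, fun x _ => hsinh_deriv x, fun x _ => ?_, ?_, by simp, ?_,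
    fun x _ => ⟨by field_simp, ?_⟩⟩
  · exact (((hsinh_deriv x).const_mul lam).add ((hcosh_deriv x).const_mul (c * μ))).div_const ε
      |>.congr_deriv (by ring)
  · rintro ⟨hu, -⟩
    exact hsinh.ne' (hu L ⟨hL.le, le_rfl⟩)
  · simp [← hs, hlam_sinh]
  · field_simp
    linear_combination sinh (μ * x) * hlam_sq

theorem neg_mul_log_inv_lt_of_mul_sinh_eq {c L κ ε μ : ℝ} (hc : 0 < c) (hκ : 0 ≤ κ)
    (hμ : 0 < μ) (hμL : 1 ≤ μ * L) (hε : 0 < ε) (hε1 : ε ≤ 1) (h : ε * sinh (μ * L) = c * μ)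
    (hgrowth : c * μ + (1 + κ * log (4 * c)) < κ * L * μ - κ * log μ) :
    -κ * log ε⁻¹ < -(c * μ * cosh (μ * L) / sinh (μ * L)) := by
  have hlog := sub_log_le_log_inv hμL (by positivity) h
  rw [← mul_assoc, log_mul (by positivity) hμ.ne'] at hlog
  have hlam := mul_cosh_div_sinh_le (by linarith) hε.le h
  nlinarith [mul_le_mul_of_nonneg_left hlog hκ]

/-- For `c, L > 0` and any `κ > c/L` there is `ε₀ > 0` such that for
every `ε ∈ (0, ε₀)` there exist a real number `λ > −κ ln(1/ε)` and C¹ functions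
`u, v` on `[0,L]`, not both identically zero, with `u 0 = v L = 0`, solving the
spectral system `λu + cu' = εv`, `λv − cv' = εu` on `[0,L]`. -/
theorem stmt1 (c L : ℝ) (hc : 0 < c) (hL : 0 < L) (κ : ℝ) (hκ : c / L < κ) :
    ∃ ε₀ : ℝ, 0 < ε₀ ∧ ∀ ε ∈ Set.Ioo (0:ℝ) ε₀,
      ∃ (lam : ℝ) (u v u' v' : ℝ → ℝ),
        -κ * Real.log ε⁻¹ < lam ∧
        ContinuousOn u' (Set.Icc 0 L) ∧ ContinuousOn v' (Set.Icc 0 L) ∧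
        (∀ x ∈ Set.Icc (0:ℝ) L, HasDerivAt u (u' x) x) ∧
        (∀ x ∈ Set.Icc (0:ℝ) L, HasDerivAt v (v' x) x) ∧
        ¬ ((∀ x ∈ Set.Icc (0:ℝ) L, u x = 0) ∧ (∀ x ∈ Set.Icc (0:ℝ) L, v x = 0)) ∧
        u 0 = 0 ∧ v L = 0 ∧
        (∀ x ∈ Set.Icc (0:ℝ) L,
          lam * u x + c * u' x = ε * v x ∧
          lam * v x - c * v' x = ε * u x) := by
  have hκ0 : 0 < κ := (div_pos hc hL).trans hκ
  have hcκ : c < κ * L := (div_lt_iff₀ hL).mp hκ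
  obtain ⟨M, hM⟩ := eventually_atTop.mp <|
    ((eventually_mul_add_lt_mul_sub_mul_log hcκ (1 + κ * log (4 * c)) κ).and
      (eventually_gt_atTop 0)).and (eventually_ge_atTop L⁻¹)
  have hM0 : 0 < M := (hM M le_rfl).1.2
  have hsinhM : 0 < sinh (M * L) := sinh_pos_iff.mpr (by positivity)
  -- `ε ≤ 1` turns the bound `|lam| ≤ c μ + ε` into one that depends on `μ` alone.
  refine ⟨min 1 (c * M / sinh (M * L)), lt_min one_pos (by positivity), fun ε ⟨hε, hεlt⟩ => ?_⟩
  have hεM : sinh (M * L) / M ≤ c / ε := by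
    have := (lt_div_iff₀ hsinhM).mp (hεlt.trans_le (min_le_right _ _))
    rw [le_div_iff₀ hε, div_mul_eq_mul_div, div_le_iff₀ hM0]
    linarith
  obtain ⟨μ, hMμ, hμ⟩ := exists_sinh_mul_div_eq hL hM0 hεM
  obtain ⟨⟨hgrowth, hμ0⟩, hμL⟩ := hM μ hMμ
  have hroot : ε * sinh (μ * L) = c * μ := by
    field_simp at hμ; linarith
  obtain ⟨u, v, u', v', h⟩ := hasEigenfunction_of_mul_sinh_eq hL hμ0 hε.ne' hroot
  refine ⟨_, u, v, u', v', ?_, h⟩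
  exact neg_mul_log_inv_lt_of_mul_sinh_eq hc hκ0.le hμ0 ((inv_le_iff_one_le_mul₀ hL).mp hμL) hε
    (hεlt.trans_le (min_le_left _ _)).le hroot hgrowth
end

section
/- Let λ, μ, f, g : ℝ² → ℝ be of class C², let (ū, v̄) ∈ ℝ² with λ(ū,v̄) > 0 and μ(ū,v̄) > 0, and let c > 0, R > 0 be such that inf(λ(u,v), μ(u,v)) ≥ c whenever ‖(u,v) − (ū,v̄)‖ ≤ 2R. Then there exist ε₀ > 0 and a map ε ∈ [−ε₀, ε₀] ↦ (ū_ε, v̄_ε), continuously differentiable as a map into the Banach space C⁰([0,L], ℝ²) with the sup norm, such that (ū₀, v̄₀) = (ū, v̄) (the constant functions), sup_{x∈[0,L]} ‖(ū_ε(x), v̄_ε(x)) − (ū, v̄)‖ < R for every ε, and for each ε the functions ū_ε, v̄_ε are of class C¹ on [0,L] and satisfy λ(ū_ε, v̄_ε) ∂ₓū_ε = ε f(ū_ε, v̄_ε), −μ(ū_ε, v̄_ε) ∂ₓv̄_ε = ε g(ū_ε, v̄_ε) on [0,L], with ū_ε(0) = ū and v̄_ε(L) = v̄. -/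
/-!
Dividing by the characteristic speeds, a steady state is a solution of
`w = w₀ + ε • T (F ∘ w)` in `C([0,L], ℝ²)`, where `w₀ = (ū, v̄)`, `F = (f/λ, g/μ)` and `T`
integrates the `u`-component from `x = 0` and the `v`-component from `x = L` (the inflow
boundaries). After cutting `F` off outside the ball of radius `2R`, where `λ, μ ≥ c > 0`, it is a
globally `C¹` map, so the superposition operator `w ↦ F ∘ w` is `C¹` on `C([0,L], ℝ²)`. The map
`(ε, w) ↦ w - ε • T (F ∘ w)` has partial derivative the identity in `w` at `(0, w₀)`, and the
implicit function theorem yields a `C¹` branch `ε ↦ w_ε` through `w₀`. For small `ε` the branch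
stays within distance `R` of `w₀`, where the cut-off is inactive, so `w_ε` solves the original
system.
-/

open Set Metric Topology Filter

noncomputable section

namespace ContinuousMap

variable {K : Type*} [TopologicalSpace K] [CompactSpace K] {E F : Type*}
  [NormedAddCommGroup E] [NormedSpace ℝ E] [NormedAddCommGroup F] [NormedSpace ℝ F]

def applyCLM : C(K, E →L[ℝ] F) →L[ℝ] C(K, E) →L[ℝ] C(K, F) :=
  LinearMap.mkContinuous₂
    (LinearMap.mk₂ ℝ
      (fun (A : C(K, E →L[ℝ] F)) (h : C(K, E)) => (⟨fun x => A x (h x), by fun_prop⟩ : C(K, F)))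
      (fun _ _ _ => by ext; simp) (fun _ _ _ => by ext; simp)
      (fun _ _ _ => by ext; simp) (fun _ _ _ => by ext; simp))
    1 fun A h => by
      rw [one_mul, ContinuousMap.norm_le _ (by positivity)]
      exact fun x => (A x).le_of_opNorm_le_of_le (A.norm_coe_le_norm x) (h.norm_coe_le_norm x)

@[simp]
theorem applyCLM_apply (A : C(K, E →L[ℝ] F)) (h : C(K, E)) (x : K) :
    applyCLM A h x = A x (h x) :=
  rfl

theorem hasFDerivAt_comp_left {G : C(E, F)} (hG : ContDiff ℝ 1 G) (w : C(K, E)) :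
    HasFDerivAt (G.comp : C(K, E) → C(K, F))
      (applyCLM ((⟨fderiv ℝ G, hG.continuous_fderiv one_ne_zero⟩ : C(E, E →L[ℝ] F)).comp w))
      w := by
  rw [hasFDerivAt_iff_isLittleO_nhds_zero, Asymptotics.isLittleO_iff]
  intro ε hε
  -- `fderiv G` is uniformly continuous at the compact set `range w`, even though `E` need not be
  -- locally compact; this makes the mean value estimate below uniform in `x`.
  obtain ⟨δ, hδ, hδε⟩ : ∃ δ > 0, ∀ x b, dist (w x) b < δ →
      dist (fderiv ℝ G (w x)) (fderiv ℝ G b) < ε := by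
    obtain ⟨δ, hδ, h⟩ := Metric.mem_uniformity_dist.1 <|
      (isCompact_range w.continuous).uniformContinuousAt_of_continuousAt (fderiv ℝ G)
        (fun a _ => (hG.continuous_fderiv one_ne_zero).continuousAt) (dist_mem_uniformity hε)
    exact ⟨δ, hδ, fun x b hb => h hb (mem_range_self x)⟩
  filter_upwards [ball_mem_nhds (0 : C(K, E)) hδ] with h hh
  rw [mem_ball_zero_iff] at hh
  refine (ContinuousMap.norm_le _ (by positivity)).2 fun x => ?_
  have hseg (z) (hz : z ∈ closedBall (w x) ‖h‖) : ‖fderiv ℝ G z - fderiv ℝ G (w x)‖ ≤ ε := by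
    rw [← dist_eq_norm, dist_comm]
    exact (hδε x z ((mem_closedBall'.1 hz).trans_lt hh)).le
  have hmvt := (convex_closedBall (w x) ‖h‖).norm_image_sub_le_of_norm_fderiv_le'
    (y := w x + h x) (fun z _ => hG.differentiable one_ne_zero z) hseg
    (mem_closedBall_self (norm_nonneg h))
    (by simpa [dist_eq_norm] using h.norm_coe_le_norm x)
  rw [add_sub_cancel_left] at hmvt
  simp only [coe_sub, coe_comp, Pi.sub_apply, Function.comp_apply, coe_add, Pi.add_apply,
    applyCLM_apply, coe_mk]
  exact hmvt.trans (by gcongr; exact h.norm_coe_le_norm x)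

theorem contDiff_comp_left {G : C(E, F)} (hG : ContDiff ℝ 1 G) :
    ContDiff ℝ 1 (G.comp : C(K, E) → C(K, F)) :=
  contDiff_one_iff_hasFDerivAt.2 ⟨_, applyCLM.continuous.comp (continuous_postcomp _),
    hasFDerivAt_comp_left hG⟩

end ContinuousMap

theorem continuous_intervalIntegral_lowerLimit {E : Type*} [NormedAddCommGroup E]
    [NormedSpace ℝ E] {ψ : ℝ → E} (hψ : Continuous ψ) (b : ℝ) :
    Continuous fun x => ∫ s in x..b, ψ s := by
  simp only [intervalIntegral.integral_symm b]
  exact (intervalIntegral.continuous_primitive (fun _ _ => hψ.intervalIntegrable _ _) b).neg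

theorem exists_contDiffAt_eq_add_smul {X : Type*} [NormedAddCommGroup X] [NormedSpace ℝ X]
    [CompleteSpace X] {Ψ : X → X} {w₀ : X} {n : WithTop ℕ∞} (hΨ : ContDiffAt ℝ n Ψ w₀)
    (hn : n ≠ 0) :
    ∃ W : ℝ → X, W 0 = w₀ ∧ ContDiffAt ℝ n W 0 ∧ ∀ᶠ ε in 𝓝 0, W ε = w₀ + ε • Ψ (W ε) := by
  set Φ : ℝ × X → X := fun q => q.2 - q.1 • Ψ q.2
  have hΦ : ContDiffAt ℝ n Φ (0, w₀) :=
    contDiffAt_snd.sub (contDiffAt_fst.smul (hΨ.comp _ contDiffAt_snd))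
  have hΦ' : HasFDerivAt Φ _ ((0 : ℝ), w₀) := hasFDerivAt_snd.sub (hasFDerivAt_fst.smul
    ((hΨ.differentiableAt hn).hasFDerivAt.comp _ (hasFDerivAt_snd (p := ((0 : ℝ), w₀)))))
  have hinv : (fderiv ℝ Φ (0, w₀) ∘L .inr ℝ ℝ X).IsInvertible := by
    have hid : fderiv ℝ Φ (0, w₀) ∘L .inr ℝ ℝ X = .id ℝ X := by
      ext y
      simp [hΦ'.fderiv]
    rw [hid]
    exact ⟨.refl ℝ X, rfl⟩
  refine ⟨hΦ.implicitFunction hn hinv, hΦ.implicitFunction_apply_self hn hinv,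
    hΦ.contDiffAt_implicitFunction hn hinv, ?_⟩
  filter_upwards [hΦ.eventually_apply_implicitFunction hn hinv] with ε hε
  rw [← sub_eq_iff_eq_add]
  simpa [Φ] using hε

theorem exists_forall_Icc_eq_add_smul {X : Type*} [NormedAddCommGroup X] [NormedSpace ℝ X]
    [CompleteSpace X] {Ψ : X → X} (hΨ : ContDiff ℝ 1 Ψ) (w₀ : X) {r : ℝ} (hr : 0 < r) :
    ∃ W : ℝ → X, W 0 = w₀ ∧ ∃ ε₀ > 0, ∀ ε ∈ Icc (-ε₀) ε₀,
      ContDiffAt ℝ 1 W ε ∧ W ε = w₀ + ε • Ψ (W ε) ∧ dist (W ε) w₀ < r := by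
  obtain ⟨W, hW0, hWd, hWfix⟩ := exists_contDiffAt_eq_add_smul hΨ.contDiffAt one_ne_zero
  have hWball : ∀ᶠ ε in 𝓝 0, dist (W ε) w₀ < r := by
    simpa [hW0] using hWd.continuousAt.eventually (ball_mem_nhds (W 0) hr)
  refine ⟨W, hW0, ?_⟩
  simpa using (nhds_basis_Icc_pos (0:ℝ)).eventually_iff.1
    ((hWd.eventually (by simp)).and (hWfix.and hWball))

theorem ContDiffBump.contDiff_smul {E F : Type*} [NormedAddCommGroup E] [NormedSpace ℝ E]
    [HasContDiffBump E] [NormedAddCommGroup F] [NormedSpace ℝ F] {c : E} (φ : ContDiffBump c)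
    {h : E → F} {n : ℕ∞} (hh : ∀ x ∈ closedBall c φ.rOut, ContDiffAt ℝ n h x) :
    ContDiff ℝ n fun x => φ x • h x := by
  refine contDiff_iff_contDiffAt.2 fun x => ?_
  by_cases hx : x ∈ closedBall c φ.rOut
  · exact φ.contDiffAt.smul (hh x hx)
  · rw [← φ.tsupport_eq] at hx
    refine (contDiffAt_const (c := (0 : F))).congr_of_eventuallyEq ?_
    filter_upwards [notMem_tsupport_iff_eventuallyEq.1 hx] with y hy
    simp [hy]

def stationaryField (lam mu f g : ℝ → ℝ → ℝ) (p : ℝ × ℝ) : ℝ × ℝ :=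
  (f p.1 p.2 / lam p.1 p.2, g p.1 p.2 / mu p.1 p.2)

theorem contDiffAt_stationaryField {lam mu f g : ℝ → ℝ → ℝ} {n : ℕ∞}
    (hlam : ContDiff ℝ n fun p : ℝ × ℝ => lam p.1 p.2)
    (hmu : ContDiff ℝ n fun p : ℝ × ℝ => mu p.1 p.2)
    (hf : ContDiff ℝ n fun p : ℝ × ℝ => f p.1 p.2)
    (hg : ContDiff ℝ n fun p : ℝ × ℝ => g p.1 p.2)
    {p : ℝ × ℝ} (hlam0 : lam p.1 p.2 ≠ 0) (hmu0 : mu p.1 p.2 ≠ 0) :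
    ContDiffAt ℝ n (stationaryField lam mu f g) p :=
  (hf.contDiffAt.div hlam.contDiffAt hlam0).prodMk (hg.contDiffAt.div hmu.contDiffAt hmu0)

theorem exists_contDiff_eqOn_stationaryField {lam mu f g : ℝ → ℝ → ℝ} {n : ℕ∞}
    (hlam : ContDiff ℝ n fun p : ℝ × ℝ => lam p.1 p.2)
    (hmu : ContDiff ℝ n fun p : ℝ × ℝ => mu p.1 p.2)
    (hf : ContDiff ℝ n fun p : ℝ × ℝ => f p.1 p.2)
    (hg : ContDiff ℝ n fun p : ℝ × ℝ => g p.1 p.2) {p₀ : ℝ × ℝ} {r : ℝ} (hr : 0 < r)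
    (hne : ∀ p ∈ closedBall p₀ (2 * r), lam p.1 p.2 ≠ 0 ∧ mu p.1 p.2 ≠ 0) :
    ∃ F : ℝ × ℝ → ℝ × ℝ,
      ContDiff ℝ n F ∧ EqOn F (stationaryField lam mu f g) (closedBall p₀ r) := by
  let φ : ContDiffBump p₀ := ⟨r, 2 * r, hr, by linarith⟩
  refine ⟨fun p => φ p • stationaryField lam mu f g p, φ.contDiff_smul fun p hp =>
    contDiffAt_stationaryField hlam hmu hf hg (hne p hp).1 (hne p hp).2, fun p hp => ?_⟩
  simp [φ.one_of_mem_closedBall hp]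

section UpwindPrimitive

open intervalIntegral

variable {L : ℝ} (hL : 0 ≤ L)

def upwindPrimitive : C(Icc (0:ℝ) L, ℝ × ℝ) →L[ℝ] C(Icc (0:ℝ) L, ℝ × ℝ) :=
  LinearMap.mkContinuous
    { toFun := fun w =>
        ⟨fun x => (∫ s in 0..(x : ℝ), (IccExtend hL w s).1,
            ∫ s in (x : ℝ)..L, (IccExtend hL w s).2), by
            have hw := (ContinuousMap.IccExtend hL w).continuous
            exact ((continuous_primitive (fun _ _ => hw.fst.intervalIntegrable _ _) 0).prodMk
              (continuous_intervalIntegral_lowerLimit hw.snd L)).comp continuous_subtype_val⟩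
      map_add' := fun w₁ w₂ => by
        have h₁ := (ContinuousMap.IccExtend hL w₁).continuous
        have h₂ := (ContinuousMap.IccExtend hL w₂).continuous
        ext x
        · simpa [IccExtend_apply] using
            integral_add (h₁.fst.intervalIntegrable 0 x) (h₂.fst.intervalIntegrable 0 x)
        · simpa [IccExtend_apply] using
            integral_add (h₁.snd.intervalIntegrable x L) (h₂.snd.intervalIntegrable x L)
      map_smul' := fun r w => by ext x <;> simp [IccExtend_apply] }
    L fun w => by
      refine (ContinuousMap.norm_le _ (by positivity)).2 fun x => ?_
      have hbound (s : ℝ) : ‖IccExtend hL w s‖ ≤ ‖w‖ := w.norm_coe_le_norm _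
      refine max_le ?_ ?_
      · calc _ ≤ ‖w‖ * |(x : ℝ) - 0| := norm_integral_le_of_norm_le_const
              fun s _ => (norm_fst_le _).trans (hbound s)
          _ ≤ L * ‖w‖ := by rw [sub_zero, abs_of_nonneg x.2.1, mul_comm]; gcongr; exact x.2.2
      · calc _ ≤ ‖w‖ * |L - x| := norm_integral_le_of_norm_le_const
              fun s _ => (norm_snd_le _).trans (hbound s)
          _ ≤ L * ‖w‖ := by
            rw [abs_of_nonneg (sub_nonneg.2 x.2.2), mul_comm]; gcongr; linarith [x.2.1]

theorem upwindPrimitive_apply (w : C(Icc (0:ℝ) L, ℝ × ℝ)) (x : Icc (0:ℝ) L) :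
    upwindPrimitive hL w x =
      (∫ s in 0..(x : ℝ), (IccExtend hL w s).1, ∫ s in (x : ℝ)..L, (IccExtend hL w s).2) :=
  rfl

variable {hL}

theorem upwindPrimitive_fst_left (G : C(Icc (0:ℝ) L, ℝ × ℝ)) :
    (IccExtend hL (upwindPrimitive hL G) 0).1 = 0 := by
  simp [upwindPrimitive_apply]

theorem upwindPrimitive_snd_right (G : C(Icc (0:ℝ) L, ℝ × ℝ)) :
    (IccExtend hL (upwindPrimitive hL G) L).2 = 0 := by
  simp [upwindPrimitive_apply]

theorem hasDerivWithinAt_upwindPrimitive_fst (G : C(Icc (0:ℝ) L, ℝ × ℝ)) {x : ℝ}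
    (hx : x ∈ Icc 0 L) :
    HasDerivWithinAt (fun y => (IccExtend hL (upwindPrimitive hL G) y).1)
      (IccExtend hL G x).1 (Icc 0 L) x := by
  have hψ := (ContinuousMap.IccExtend hL G).continuous.fst
  refine (hψ.integral_hasStrictDerivAt 0 x).hasDerivAt.hasDerivWithinAt.congr_of_mem
    (fun y hy => ?_) hx
  rw [IccExtend_of_mem _ _ hy, upwindPrimitive_apply]
  rfl

theorem hasDerivWithinAt_upwindPrimitive_snd (G : C(Icc (0:ℝ) L, ℝ × ℝ)) {x : ℝ}
    (hx : x ∈ Icc 0 L) :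
    HasDerivWithinAt (fun y => (IccExtend hL (upwindPrimitive hL G) y).2)
      (-(IccExtend hL G x).2) (Icc 0 L) x := by
  have hψ := (ContinuousMap.IccExtend hL G).continuous.snd
  refine (hψ.integral_hasStrictDerivAt L x).hasDerivAt.neg.hasDerivWithinAt.congr_of_mem
    (fun y hy => ?_) hx
  rw [IccExtend_of_mem _ _ hy, upwindPrimitive_apply, Pi.neg_apply,
    ← intervalIntegral.integral_symm]
  rfl

end UpwindPrimitive

def IsSteadyState (L : ℝ) (lam mu f g : ℝ → ℝ → ℝ) (ubar vbar ε : ℝ) (u v : ℝ → ℝ) : Prop :=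
  u 0 = ubar ∧ v L = vbar ∧
    ∃ u' v' : ℝ → ℝ, ContinuousOn u' (Icc 0 L) ∧ ContinuousOn v' (Icc 0 L) ∧
      ∀ x ∈ Icc (0:ℝ) L,
        HasDerivWithinAt u (u' x) (Icc 0 L) x ∧ HasDerivWithinAt v (v' x) (Icc 0 L) x ∧
        lam (u x) (v x) * u' x = ε * f (u x) (v x) ∧
        -(mu (u x) (v x)) * v' x = ε * g (u x) (v x)

theorem isSteadyState_of_eq_add_smul_upwindPrimitive {L : ℝ} (hL : 0 ≤ L)
    {lam mu f g : ℝ → ℝ → ℝ} {ubar vbar ε : ℝ} {W G : C(Icc (0:ℝ) L, ℝ × ℝ)}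
    (hW : W = ContinuousMap.const _ (ubar, vbar) + ε • upwindPrimitive hL G)
    (hG : ∀ x, G x = stationaryField lam mu f g (W x))
    (hne : ∀ x, lam (W x).1 (W x).2 ≠ 0 ∧ mu (W x).1 (W x).2 ≠ 0) :
    IsSteadyState L lam mu f g ubar vbar ε (fun x => (IccExtend hL W x).1)
      (fun x => (IccExtend hL W x).2) := by
  have hWext : IccExtend hL W = fun y =>
      (ubar, vbar) + ε • IccExtend hL (upwindPrimitive hL G) y := by
    ext y <;> simp [hW, IccExtend_apply]
  have hGc := (ContinuousMap.IccExtend hL G).continuous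
  refine ⟨?_, ?_, fun x => ε * (IccExtend hL G x).1, fun x => -(ε * (IccExtend hL G x).2),
    (continuous_const.mul hGc.fst).continuousOn,
    (continuous_const.mul hGc.snd).neg.continuousOn, fun x hx => ⟨?_, ?_, ?_, ?_⟩⟩
  · simp only [hWext, Prod.fst_add, Prod.smul_fst, upwindPrimitive_fst_left, smul_zero, add_zero]
  · simp only [hWext, Prod.snd_add, Prod.smul_snd, upwindPrimitive_snd_right, smul_zero,
      add_zero]
  · rw [hWext]
    exact ((hasDerivWithinAt_upwindPrimitive_fst G hx).const_mul ε).const_add ubar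
  · have hv := ((hasDerivWithinAt_upwindPrimitive_snd (hL := hL) G hx).const_mul ε).const_add
      vbar
    rw [mul_neg] at hv
    rw [hWext]
    exact hv
  · obtain ⟨hlam, -⟩ := hne ⟨x, hx⟩
    simp only [IccExtend_of_mem hL _ hx, hG, stationaryField]
    field_simp
  · obtain ⟨-, hmu⟩ := hne ⟨x, hx⟩
    simp only [IccExtend_of_mem hL _ hx, hG, stationaryField]
    field_simp

end

theorem stmt3_general (L : ℝ) (hL : 0 < L)
    (lam mu f g : ℝ → ℝ → ℝ)
    (hlam : ContDiff ℝ 2 fun p : ℝ × ℝ => lam p.1 p.2)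
    (hmu : ContDiff ℝ 2 fun p : ℝ × ℝ => mu p.1 p.2)
    (hf : ContDiff ℝ 2 fun p : ℝ × ℝ => f p.1 p.2)
    (hg : ContDiff ℝ 2 fun p : ℝ × ℝ => g p.1 p.2)
    (ubar vbar : ℝ)
    (c R : ℝ) (hc : 0 < c) (hR : 0 < R)
    (hcR : ∀ u v : ℝ, ‖(u - ubar, v - vbar)‖ ≤ 2 * R → c ≤ min (lam u v) (mu u v)) :
    ∃ ε₀ : ℝ, 0 < ε₀ ∧ ∃ ue ve : ℝ → ℝ → ℝ,
      (∃ Φ : ℝ → C(Set.Icc (0:ℝ) L, ℝ × ℝ),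
        (∀ (ε : ℝ) (x : Set.Icc (0:ℝ) L), Φ ε x = (ue ε x.1, ve ε x.1)) ∧
        ContDiffOn ℝ 1 Φ (Set.Icc (-ε₀) ε₀)) ∧
      (∀ x ∈ Set.Icc (0:ℝ) L, ue 0 x = ubar ∧ ve 0 x = vbar) ∧
      ∀ ε ∈ Set.Icc (-ε₀) ε₀,
        (∀ x ∈ Set.Icc (0:ℝ) L, ‖(ue ε x - ubar, ve ε x - vbar)‖ < R) ∧
        ue ε 0 = ubar ∧ ve ε L = vbar ∧
        ∃ ue' ve' : ℝ → ℝ,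
          ContinuousOn ue' (Set.Icc 0 L) ∧ ContinuousOn ve' (Set.Icc 0 L) ∧
          ∀ x ∈ Set.Icc (0:ℝ) L,
            HasDerivWithinAt (ue ε) (ue' x) (Set.Icc 0 L) x ∧
            HasDerivWithinAt (ve ε) (ve' x) (Set.Icc 0 L) x ∧
            lam (ue ε x) (ve ε x) * ue' x = ε * f (ue ε x) (ve ε x) ∧
            -(mu (ue ε x) (ve ε x)) * ve' x = ε * g (ue ε x) (ve ε x) := by
  have hne : ∀ p ∈ closedBall ((ubar, vbar) : ℝ × ℝ) (2 * R),
      lam p.1 p.2 ≠ 0 ∧ mu p.1 p.2 ≠ 0 := by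
    intro p hp
    have hcp := le_min_iff.1 (hcR p.1 p.2 (by rwa [mem_closedBall, dist_eq_norm] at hp))
    exact ⟨(hc.trans_le hcp.1).ne', (hc.trans_le hcp.2).ne'⟩
  obtain ⟨F, hF, hFeq⟩ := exists_contDiff_eqOn_stationaryField (hlam.of_le one_le_two)
    (hmu.of_le one_le_two) (hf.of_le one_le_two) (hg.of_le one_le_two) hR hne
  let w₀ := ContinuousMap.const (Icc (0:ℝ) L) (ubar, vbar)
  obtain ⟨W, hW0, ε₀, hε₀, hW⟩ := exists_forall_Icc_eq_add_smul
    ((upwindPrimitive hL.le).contDiff.comp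
      (ContinuousMap.contDiff_comp_left (G := ⟨F, hF.continuous⟩) hF)) w₀ hR
  refine ⟨ε₀, hε₀, fun ε x => (IccExtend hL.le (W ε) x).1, fun ε x => (IccExtend hL.le (W ε) x).2,
    ⟨W, fun ε x => by simp, fun ε hε => (hW ε hε).1.contDiffWithinAt⟩,
    fun x hx => by simp [IccExtend_of_mem hL.le _ hx, hW0, w₀], fun ε hε => ?_⟩
  obtain ⟨-, hfix, hball⟩ := hW ε hε
  have hWx (x) : dist (W ε x) (ubar, vbar) < R :=
    (ContinuousMap.dist_apply_le_dist x).trans_lt hball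
  refine ⟨fun x hx => ?_, isSteadyState_of_eq_add_smul_upwindPrimitive hL.le hfix
    (fun x => hFeq (mem_closedBall.2 (hWx x).le))
    (fun x => hne _ (mem_closedBall.2 (by linarith [hWx x])))⟩
  simp only [IccExtend_of_mem hL.le _ hx]
  exact (dist_eq_norm _ _).symm.trans_lt (hWx ⟨x, hx⟩)

/-- Existence of a C¹ family `ε ↦ (ū_ε, v̄_ε)` of stationary states
of the quasilinear system, valued in the Banach space `C([0,L], ℝ²)`, with
`(ū₀, v̄₀) = (ū, v̄)`, staying in the ball of radius `R` around `(ū, v̄)`,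
each `(ū_ε, v̄_ε)` being C¹ on `[0,L]` and solving
`λ(ū_ε,v̄_ε)∂ₓū_ε = εf(ū_ε,v̄_ε)`, `−μ(ū_ε,v̄_ε)∂ₓv̄_ε = εg(ū_ε,v̄_ε)` with
`ū_ε(0) = ū`, `v̄_ε(L) = v̄`. -/
theorem stmt3 (L : ℝ) (hL : 0 < L)
    (lam mu f g : ℝ → ℝ → ℝ)
    (hlam : ContDiff ℝ 2 fun p : ℝ × ℝ => lam p.1 p.2)
    (hmu : ContDiff ℝ 2 fun p : ℝ × ℝ => mu p.1 p.2)
    (hf : ContDiff ℝ 2 fun p : ℝ × ℝ => f p.1 p.2)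
    (hg : ContDiff ℝ 2 fun p : ℝ × ℝ => g p.1 p.2)
    (ubar vbar : ℝ) (hlam0 : 0 < lam ubar vbar) (hmu0 : 0 < mu ubar vbar)
    (c R : ℝ) (hc : 0 < c) (hR : 0 < R)
    (hcR : ∀ u v : ℝ, ‖(u - ubar, v - vbar)‖ ≤ 2 * R → c ≤ min (lam u v) (mu u v)) :
    ∃ ε₀ : ℝ, 0 < ε₀ ∧ ∃ ue ve : ℝ → ℝ → ℝ,
      (∃ Φ : ℝ → C(Set.Icc (0:ℝ) L, ℝ × ℝ),
        (∀ (ε : ℝ) (x : Set.Icc (0:ℝ) L), Φ ε x = (ue ε x.1, ve ε x.1)) ∧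
        ContDiffOn ℝ 1 Φ (Set.Icc (-ε₀) ε₀)) ∧
      (∀ x ∈ Set.Icc (0:ℝ) L, ue 0 x = ubar ∧ ve 0 x = vbar) ∧
      ∀ ε ∈ Set.Icc (-ε₀) ε₀,
        (∀ x ∈ Set.Icc (0:ℝ) L, ‖(ue ε x - ubar, ve ε x - vbar)‖ < R) ∧
        ue ε 0 = ubar ∧ ve ε L = vbar ∧
        ∃ ue' ve' : ℝ → ℝ,
          ContinuousOn ue' (Set.Icc 0 L) ∧ ContinuousOn ve' (Set.Icc 0 L) ∧
          ∀ x ∈ Set.Icc (0:ℝ) L,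
            HasDerivWithinAt (ue ε) (ue' x) (Set.Icc 0 L) x ∧
            HasDerivWithinAt (ve ε) (ve' x) (Set.Icc 0 L) x ∧
            lam (ue ε x) (ve ε x) * ue' x = ε * f (ue ε x) (ve ε x) ∧
            -(mu (ue ε x) (ve ε x)) * ve' x = ε * g (ue ε x) (ve ε x) :=
  stmt3_general L hL lam mu f g hlam hmu hf hg ubar vbar c R hc hR hcR
end

section
/- Let L > 0 and let u : [0,L] → ℝ be Lipschitz continuous. Then at least one of the following two inequalities holds: ‖u‖_{L^∞(0,L)} ≤ (2/√L) ‖u‖_{L²(0,L)}, or ‖u‖³_{L^∞(0,L)} ≤ 8 ‖u‖²_{L²(0,L)} ‖u'‖_{L^∞(0,L)}, where ‖u'‖_{L^∞(0,L)} denotes the essential supremum of the (almost everywhere defined) derivative of u. -/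
/-!
Let `M = |u x₀|` be the maximum of `|u|` on `[0, L]`. The Lipschitz bound gives
`|u x| ≥ M - K |x - x₀|`, hence `u x ^ 2 ≥ M ^ 2 - 2 M K |x - x₀|`, and integrating this over an
interval of length `ℓ ≤ L / 2` with endpoint `x₀` (one always fits inside `[0, L]`) yields
`M ^ 2 ℓ - M K ℓ ^ 2 ≤ ∫ u ^ 2`. Choosing `ℓ = L / 2` when `K L ≤ M` gives the first inequality,
and `ℓ = M / (2 K)` otherwise gives the second.
-/

open Set intervalIntegral

namespace LipschitzOnWith

variable {u : ℝ → ℝ} {K : NNReal}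

theorem sq_abs_sub_two_mul_dist_le_sq {s : Set ℝ} (hu : LipschitzOnWith K u s) {a x : ℝ}
    (ha : a ∈ s) (hx : x ∈ s) : |u a| ^ 2 - 2 * |u a| * K * dist x a ≤ u x ^ 2 := by
  have hlow : |u a| - K * dist x a ≤ |u x| := by
    have := hu.dist_le_mul a ha x hx
    rw [Real.dist_eq, dist_comm] at this
    linarith [abs_sub_abs_le_abs_sub (u a) (u x)]
  have hKd : 0 ≤ K * dist x a := mul_nonneg K.2 dist_nonneg
  rw [← sq_abs (u x)]
  rcases le_total 0 (|u a| - K * dist x a) with hpos | hneg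
  · nlinarith [pow_le_pow_left₀ hpos hlow 2]
  · nlinarith [abs_nonneg (u a), abs_nonneg (u x)]

theorem sq_mul_sub_le_integral_sq_left {a b : ℝ} (hu : LipschitzOnWith K u (Icc a b))
    (hab : a ≤ b) : |u a| ^ 2 * (b - a) - |u a| * K * (b - a) ^ 2 ≤ ∫ x in a..b, u x ^ 2 := by
  calc |u a| ^ 2 * (b - a) - |u a| * K * (b - a) ^ 2
      = ∫ x in a..b, (|u a| ^ 2 - 2 * |u a| * K * (x - a)) := by
        rw [integral_comp_sub_right (fun x => |u a| ^ 2 - 2 * |u a| * K * x),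
          intervalIntegral.integral_sub, integral_const_mul] <;>
          simp [(continuous_const_mul _).intervalIntegrable]
        ring
    _ ≤ ∫ x in a..b, u x ^ 2 := by
      refine integral_mono_on hab ((by fun_prop : Continuous _).intervalIntegrable _ _)
        ((hu.continuousOn.pow 2).intervalIntegrable_of_Icc hab) fun x hx => ?_
      simpa [Real.dist_eq, abs_of_nonneg (sub_nonneg.2 hx.1)] using
        hu.sq_abs_sub_two_mul_dist_le_sq (left_mem_Icc.2 hab) hx

theorem sq_mul_sub_le_integral_sq_right {a b : ℝ} (hu : LipschitzOnWith K u (Icc a b))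
    (hab : a ≤ b) : |u b| ^ 2 * (b - a) - |u b| * K * (b - a) ^ 2 ≤ ∫ x in a..b, u x ^ 2 := by
  have hv : LipschitzOnWith K (fun x => u (-x)) (Icc (-b) (-a)) := by
    simpa [Function.comp_def] using
      hu.comp (LipschitzWith.id.neg.lipschitzOnWith (s := Icc (-b) (-a))) fun x hx => by
        simp only [mem_Icc, Pi.neg_apply, id] at hx ⊢
        constructor <;> linarith
  simpa [integral_comp_neg (fun x => u x ^ 2), sub_eq_add_neg, add_comm] using
    hv.sq_mul_sub_le_integral_sq_left (neg_le_neg hab)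

theorem sq_mul_sub_le_integral_sq {a b x₀ ℓ : ℝ}
    (hu : LipschitzOnWith K u (Icc a b)) (hx₀ : x₀ ∈ Icc a b) (hℓ : 0 ≤ ℓ)
    (hℓab : 2 * ℓ ≤ b - a) : |u x₀| ^ 2 * ℓ - |u x₀| * K * ℓ ^ 2 ≤ ∫ x in a..b, u x ^ 2 := by
  have hsub : ∀ {c d}, a ≤ c → c ≤ d → d ≤ b → ∫ x in c..d, u x ^ 2 ≤ ∫ x in a..b, u x ^ 2 :=
    fun hac hcd hdb => integral_mono_interval hac hcd hdb
      (Filter.Eventually.of_forall fun _ => sq_nonneg _)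
      ((hu.continuousOn.pow 2).intervalIntegrable_of_Icc (hac.trans (hcd.trans hdb)))
  rcases le_total (x₀ + ℓ) b with h | h
  · have hleft := (hu.mono (Icc_subset_Icc hx₀.1 h)).sq_mul_sub_le_integral_sq_left
      (le_add_of_nonneg_right hℓ)
    rw [add_sub_cancel_left] at hleft
    exact hleft.trans (hsub hx₀.1 (le_add_of_nonneg_right hℓ) h)
  · have hright := (hu.mono (Icc_subset_Icc (by linarith) hx₀.2)).sq_mul_sub_le_integral_sq_right
      (sub_le_self _ hℓ)
    rw [sub_sub_cancel] at hright
    exact hright.trans (hsub (by linarith) (sub_le_self _ hℓ) hx₀.2)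

end LipschitzOnWith

theorem le_two_div_sqrt_mul_sqrt_or_pow_three_le {M L I K : ℝ} (hM : 0 ≤ M) (hL : 0 < L)
    (h : ∀ ℓ, 0 ≤ ℓ → 2 * ℓ ≤ L → M ^ 2 * ℓ - M * K * ℓ ^ 2 ≤ I) :
    M ≤ 2 / √L * √I ∨ M ^ 3 ≤ 8 * I * K := by
  rcases le_or_gt (K * L) M with hKL | hKL
  · left
    have hI : M ^ 2 * L ≤ 4 * I := by
      nlinarith [h (L / 2) (by positivity) (by linarith), mul_le_mul_of_nonneg_left hKL hM]
    rw [div_mul_eq_mul_div, le_div_iff₀ (Real.sqrt_pos.2 hL)]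
    calc M * √L = √(M ^ 2 * L) := by rw [Real.sqrt_mul (sq_nonneg M), Real.sqrt_sq hM]
      _ ≤ √(2 ^ 2 * I) := Real.sqrt_le_sqrt (by linarith)
      _ = 2 * √I := by rw [Real.sqrt_mul (by norm_num), Real.sqrt_sq (by norm_num)]
  · right
    have hK : 0 < K := by nlinarith
    have hI := h (M / (2 * K)) (by positivity) (by
      rw [mul_div_assoc', div_le_iff₀ (by positivity)]; nlinarith)
    have hval : M ^ 2 * (M / (2 * K)) - M * K * (M / (2 * K)) ^ 2 = M ^ 3 / (4 * K) := by
      field_simp; ring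
    rw [hval, div_le_iff₀ (by positivity)] at hI
    nlinarith [pow_nonneg hM 3]

/-- For a Lipschitz function `u` on `[0,L]`, either
`‖u‖_∞ ≤ (2/√L)‖u‖_{L²}` or `‖u‖_∞³ ≤ 8 ‖u‖_{L²}² ‖u'‖_∞`, where the essential
supremum of the a.e. derivative of a Lipschitz function is its best Lipschitz
constant (so any Lipschitz constant `K` is an upper bound for it). -/
theorem stmt4 (L : ℝ) (hL : 0 < L) (u : ℝ → ℝ) (K : NNReal)
    (hu : LipschitzOnWith K u (Set.Icc 0 L)) :
    (⨆ x : Set.Icc (0:ℝ) L, |u x.1|) ≤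
        2 / Real.sqrt L * Real.sqrt (∫ x in (0:ℝ)..L, (u x) ^ 2) ∨
    (⨆ x : Set.Icc (0:ℝ) L, |u x.1|) ^ 3 ≤
        8 * (∫ x in (0:ℝ)..L, (u x) ^ 2) * (K : ℝ) := by
  obtain ⟨x₀, hx₀, hmax⟩ :=
    isCompact_Icc.exists_isMaxOn (nonempty_Icc.2 hL.le) hu.continuousOn.abs
  rw [hmax.iSup_eq hx₀]
  exact le_two_div_sqrt_mul_sqrt_or_pow_three_le (abs_nonneg _) hL
    fun ℓ hℓ hℓL => hu.sq_mul_sub_le_integral_sq hx₀ hℓ (by linarith)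
end

section
/- Let L > 0 and let u : [0,L] → ℝ be Lipschitz continuous with u(0) = 0. Then ‖u‖³_{L^∞(0,L)} ≤ 16 ‖u‖²_{L²(0,L)} ‖u'‖_{L^∞(0,L)}, where ‖u'‖_{L^∞(0,L)} denotes the essential supremum of the (almost everywhere defined) derivative of u. -/
/-!
Let `m = |u x₀|` be the maximum of `|u|` on `[0, L]`. Since `u 0 = 0`, the Lipschitz bound gives
`m ≤ K x₀`, so the interval `[x₀ - m / (4K), x₀]` lies in `[0, L]`; on it `|u| ≥ m - K · m / (4K) ≥ m / 2`.
Hence `∫₀ᴸ u² ≥ (m / (4K)) (m / 2)² = m³ / (16 K)`.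
-/

open Set

lemma mul_sq_le_integral_sq {u : ℝ → ℝ} {a b c d m : ℝ} (hac : a ≤ c) (hcd : c ≤ d) (hdb : d ≤ b)
    (hu : ContinuousOn u (Icc a b)) (hlow : ∀ x ∈ Icc c d, m ≤ |u x|) (hm : 0 ≤ m) :
    (d - c) * m ^ 2 ≤ ∫ x in a..b, u x ^ 2 := by
  have hint : IntervalIntegrable (fun x => u x ^ 2) MeasureTheory.volume a b :=
    (hu.pow 2).intervalIntegrable_of_Icc (hac.trans (hcd.trans hdb))
  have hint_cd : IntervalIntegrable (fun x => u x ^ 2) MeasureTheory.volume c d :=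
    hint.mono_set (by rw [uIcc_of_le hcd, uIcc_of_le (hac.trans (hcd.trans hdb))]; gcongr)
  calc (d - c) * m ^ 2 = ∫ _ in c..d, m ^ 2 := by simp
    _ ≤ ∫ x in c..d, u x ^ 2 :=
      intervalIntegral.integral_mono_on hcd intervalIntegrable_const hint_cd fun x hx => by
        simpa only [sq_abs] using pow_le_pow_left₀ hm (hlow x hx) 2
    _ ≤ ∫ x in a..b, u x ^ 2 :=
      intervalIntegral.integral_mono_interval hac hcd hdb
        (Filter.Eventually.of_forall fun x => sq_nonneg _) hint

lemma LipschitzOnWith.abs_sub_mul_le_abs {u : ℝ → ℝ} {K : NNReal} {s : Set ℝ}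
    (hu : LipschitzOnWith K u s) {x y : ℝ} (hx : x ∈ s) (hy : y ∈ s) :
    |u x| - K * |x - y| ≤ |u y| := by
  have h := hu.dist_le_mul x hx y hy
  rw [Real.dist_eq, Real.dist_eq] at h
  linarith [abs_sub_abs_le_abs_sub (u x) (u y)]

lemma LipschitzOnWith.abs_pow_three_le_integral_sq {u : ℝ → ℝ} {K : NNReal} {a b x₀ : ℝ}
    (hu : LipschitzOnWith K u (Icc a b)) (hua : u a = 0) (hx₀ : x₀ ∈ Icc a b) :
    |u x₀| ^ 3 ≤ 16 * (∫ x in a..b, u x ^ 2) * K := by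
  set m := |u x₀|
  have ha : a ∈ Icc a b := ⟨le_rfl, hx₀.1.trans hx₀.2⟩
  have hm_le : m ≤ K * (x₀ - a) := by
    simpa [hua, abs_of_nonneg (sub_nonneg.2 hx₀.1)] using hu.abs_sub_mul_le_abs hx₀ ha
  rcases (abs_nonneg (u x₀)).eq_or_lt with hm0 | hm_pos
  · rw [show m = 0 from hm0.symm, zero_pow three_ne_zero]
    have : 0 ≤ ∫ x in a..b, u x ^ 2 :=
      intervalIntegral.integral_nonneg (hx₀.1.trans hx₀.2) fun x _ => sq_nonneg (u x)
    positivity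
  have hK : (0 : ℝ) < K := pos_of_mul_pos_left (hm_pos.trans_le hm_le) (sub_nonneg.2 hx₀.1)
  set r := m / (4 * K) with hr
  have hKr : K * r = m / 4 := by rw [hr]; field_simp
  have hr_nonneg : 0 ≤ r := by positivity
  have har : a ≤ x₀ - r := by nlinarith
  have hlow : ∀ x ∈ Icc (x₀ - r) x₀, m / 2 ≤ |u x| := by
    intro x hx
    have hxab : x ∈ Icc a b := ⟨har.trans hx.1, hx.2.trans hx₀.2⟩
    have hdist : |x₀ - x| ≤ r := by rw [abs_of_nonneg (by linarith [hx.2])]; linarith [hx.1]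
    nlinarith [hu.abs_sub_mul_le_abs hx₀ hxab, mul_le_mul_of_nonneg_left hdist hK.le]
  have hint := mul_sq_le_integral_sq har (by linarith) hx₀.2 hu.continuousOn hlow (by positivity)
  calc m ^ 3 = 16 * ((x₀ - (x₀ - r)) * (m / 2) ^ 2) * K := by
        linear_combination (-4 * m ^ 2) * hKr
    _ ≤ 16 * (∫ x in a..b, u x ^ 2) * K := by gcongr

/-- For a Lipschitz function `u` on `[0,L]` with `u 0 = 0`,
`‖u‖_∞³ ≤ 16 ‖u‖_{L²}² ‖u'‖_∞`, where the essential supremum of the a.e.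
derivative of a Lipschitz function is its best Lipschitz constant (so any
Lipschitz constant `K` is an upper bound for it). -/
theorem stmt5 (L : ℝ) (hL : 0 < L) (u : ℝ → ℝ) (K : NNReal)
    (hu : LipschitzOnWith K u (Set.Icc 0 L)) (hu0 : u 0 = 0) :
    (⨆ x : Set.Icc (0:ℝ) L, |u x.1|) ^ 3 ≤
      16 * (∫ x in (0:ℝ)..L, (u x) ^ 2) * (K : ℝ) := by
  obtain ⟨x₀, hx₀, hmax⟩ :=
    isCompact_Icc.exists_isMaxOn ⟨0, le_rfl, hL.le⟩ hu.continuousOn.abs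
  rw [hmax.iSup_eq hx₀]
  exact hu.abs_pow_three_le_integral_sq hu0 hx₀
end

section
/- Let c, K, θ, C̃ > 0 and γ ∈ (0,1). Let Y_l, Y_r : ℝ₊ → ℝ solve the ordinary differential equations Y_l' = −K Y_l/|Y_l|^γ and Y_r' = −K Y_r/|Y_r|^γ. Define L̃_θ(a,b) := (C̃ |a|^{γ+2}/(K(γ+2))) e^{θ (c/(Kγ)) |a|^γ} + (C̃ |b|^{γ+2}/(K(γ+2))) e^{θ (c/(Kγ)) |b|^γ}. Then for all t ≥ 0, (d/dt) L̃_θ(Y_l(t), Y_r(t)) ≤ −cθ L̃_θ(Y_l(t), Y_r(t)) − C̃ (Y_l(t)² + Y_r(t)²). -/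
/-!
Write `u = |Y|^γ`, `α = θ c / (K γ)` and `e = exp (α u)`. Along `Y' = -K Y / |Y|^γ` the chain
rule gives `d/dt (|Y|^(γ+2) e) = -K Y² e (γ + 2 + α γ u)`; multiplied by `C̃ / (K (γ + 2))` this is
exactly `-c θ` times the corresponding term of `L̃_θ` minus `C̃ Y² e`, and `e ≥ 1`. At `Y = 0` the
term is still differentiable with derivative `0`, since `|x|^(γ+2)` is `o(x)` there while
`exp (α |x|^γ)` stays bounded.
-/

open Real

theorem HasDerivAt.mul_continuousAt_of_eq_zero {f g : ℝ → ℝ} {x : ℝ}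
    (hf : HasDerivAt f 0 x) (hfx : f x = 0) (hg : ContinuousAt g x) :
    HasDerivAt (fun y => f y * g y) 0 x := by
  rw [hasDerivAt_iff_isLittleO] at hf ⊢
  simp only [hfx, smul_zero, sub_zero, zero_mul] at hf ⊢
  simpa using hf.mul_isBigO (hg.tendsto.isBigO_one ℝ)

theorem hasDerivAt_abs_rpow_of_ne_zero {x : ℝ} (p : ℝ) (hx : x ≠ 0) :
    HasDerivAt (fun y => |y| ^ p) (p * |x| ^ (p - 2) * x) x := by
  have hr : 0 < |x| := abs_pos.2 hx
  refine ((hasDerivAt_rpow_const (p := p) (Or.inl hr.ne')).comp x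
    (hasDerivAt_abs hx)).congr_deriv ?_
  rw [rpow_sub hr, rpow_sub hr, rpow_one, rpow_two, sq_abs]
  rcases hx.lt_or_gt with h | h
  · simp only [abs_of_neg h, sign_neg h, SignType.coe_neg, SignType.coe_one, mul_neg, mul_one]
    field_simp
  · simp only [abs_of_pos h, sign_pos h, SignType.coe_one, mul_one]
    field_simp

theorem hasDerivAt_abs_rpow_add_two_mul_exp {γ : ℝ} (hγ : 0 < γ) (α x : ℝ) :
    HasDerivAt (fun y => |y| ^ (γ + 2) * exp (α * |y| ^ γ))
      (x * |x| ^ γ * exp (α * |x| ^ γ) * (γ + 2 + α * γ * |x| ^ γ)) x := by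
  have hpow := hasDerivAt_abs_rpow x (p := γ + 2) (by linarith)
  rw [add_sub_cancel_right] at hpow
  rcases eq_or_ne x 0 with rfl | hx
  · simp only [zero_mul]
    refine HasDerivAt.mul_continuousAt_of_eq_zero (by simpa using hpow) ?_ ?_
    · simp [zero_rpow (by linarith : γ + 2 ≠ 0)]
    · fun_prop (disch := exact Or.inr hγ.le)
  · have hu := hasDerivAt_abs_rpow_of_ne_zero γ hx
    refine (hpow.mul (hu.const_mul α).exp).congr_deriv ?_
    have hr : 0 < |x| := abs_pos.2 hx
    rw [rpow_sub hr, rpow_add hr, rpow_two, sq_abs]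
    field_simp

theorem hasDerivWithinAt_abs_rpow_add_two_mul_exp_of_ode {Y : ℝ → ℝ} {s : Set ℝ}
    {t K γ : ℝ} (hγ : 0 < γ) (α : ℝ) (hY : HasDerivWithinAt Y (-K * Y t / |Y t| ^ γ) s t) :
    HasDerivWithinAt (fun u => |Y u| ^ (γ + 2) * exp (α * |Y u| ^ γ))
      (-K * Y t ^ 2 * exp (α * |Y t| ^ γ) * (γ + 2 + α * γ * |Y t| ^ γ)) s t := by
  refine ((hasDerivAt_abs_rpow_add_two_mul_exp hγ α (Y t)).comp_hasDerivWithinAt t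
    hY).congr_deriv ?_
  rcases eq_or_ne (Y t) 0 with h | h
  · simp [h]
  · have : |Y t| ^ γ ≠ 0 := (rpow_pos_of_pos (abs_pos.2 h) γ).ne'
    field_simp

theorem lyapunov_term_hasDerivWithinAt_le {c K θ Ctil γ : ℝ} (hK : K ≠ 0) (hC : 0 ≤ Ctil)
    (hγ : 0 < γ) (hα : 0 ≤ θ * (c / (K * γ))) {Y : ℝ → ℝ} {s : Set ℝ} {t : ℝ}
    (hY : HasDerivWithinAt Y (-K * Y t / |Y t| ^ γ) s t) :
    ∃ D, HasDerivWithinAt (fun u => Ctil * |Y u| ^ (γ + 2) / (K * (γ + 2)) *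
        exp (θ * (c / (K * γ)) * |Y u| ^ γ)) D s t ∧
      D ≤ -(c * θ) * (Ctil * |Y t| ^ (γ + 2) / (K * (γ + 2)) *
        exp (θ * (c / (K * γ)) * |Y t| ^ γ)) - Ctil * Y t ^ 2 := by
  set α := θ * (c / (K * γ))
  have hD := (hasDerivWithinAt_abs_rpow_add_two_mul_exp_of_ode hγ α hY).const_mul
    (Ctil / (K * (γ + 2)))
  have hfun : (fun u => Ctil * |Y u| ^ (γ + 2) / (K * (γ + 2)) * exp (α * |Y u| ^ γ)) =
      fun u => Ctil / (K * (γ + 2)) * (|Y u| ^ (γ + 2) * exp (α * |Y u| ^ γ)) := by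
    funext u; ring
  refine ⟨_, hfun ▸ hD, ?_⟩
  have hsplit : |Y t| ^ (γ + 2) = Y t ^ 2 * |Y t| ^ γ := by
    rw [rpow_add' (abs_nonneg _) (by linarith), rpow_two, sq_abs, mul_comm]
  have hexp : 1 ≤ exp (α * |Y t| ^ γ) := one_le_exp (by positivity)
  calc Ctil / (K * (γ + 2)) *
        (-K * Y t ^ 2 * exp (α * |Y t| ^ γ) * (γ + 2 + α * γ * |Y t| ^ γ))
      = -(c * θ) * (Ctil * |Y t| ^ (γ + 2) / (K * (γ + 2)) * exp (α * |Y t| ^ γ))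
          - Ctil * Y t ^ 2 * exp (α * |Y t| ^ γ) := by
        simp only [hsplit, α]
        field_simp
        ring
    _ ≤ _ := sub_le_sub_left (le_mul_of_one_le_right (by positivity) hexp) _

/-- Let `Y_l, Y_r` solve `Y' = −K Y/|Y|^γ` (with the convention
`Y/|Y|^γ = 0` when `Y = 0`, which is Lean's convention `x/0 = 0`), and let
`L̃_θ(a,b) = (C̃|a|^{γ+2}/(K(γ+2))) e^{θ(c/(Kγ))|a|^γ} + (same in b)`. Then for
all `t ≥ 0` the derivative of `t ↦ L̃_θ(Y_l t, Y_r t)` exists and is at most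
`−cθ L̃_θ(Y_l t, Y_r t) − C̃(Y_l t² + Y_r t²)`. -/
theorem stmt8 (c K θ Ctil γ : ℝ) (hc : 0 < c) (hK : 0 < K) (hθ : 0 < θ)
    (hC : 0 < Ctil) (hγ : γ ∈ Set.Ioo (0:ℝ) 1)
    (Yl Yr : ℝ → ℝ)
    (hYl : ∀ t : ℝ, 0 ≤ t →
      HasDerivWithinAt Yl (-K * Yl t / |Yl t| ^ γ) (Set.Ici 0) t)
    (hYr : ∀ t : ℝ, 0 ≤ t →
      HasDerivWithinAt Yr (-K * Yr t / |Yr t| ^ γ) (Set.Ici 0) t)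
    (Lt : ℝ → ℝ → ℝ)
    (hLt : ∀ a b : ℝ, Lt a b =
      Ctil * |a| ^ (γ + 2) / (K * (γ + 2)) * Real.exp (θ * (c / (K * γ)) * |a| ^ γ) +
      Ctil * |b| ^ (γ + 2) / (K * (γ + 2)) * Real.exp (θ * (c / (K * γ)) * |b| ^ γ)) :
    ∀ t : ℝ, 0 ≤ t → ∃ D : ℝ,
      HasDerivWithinAt (fun s => Lt (Yl s) (Yr s)) D (Set.Ici 0) t ∧
      D ≤ -(c * θ) * Lt (Yl t) (Yr t) - Ctil * (Yl t ^ 2 + Yr t ^ 2) := by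
  intro t ht
  have hα : 0 ≤ θ * (c / (K * γ)) := by have := hγ.1; positivity
  obtain ⟨Dl, hDl, hDl_le⟩ :=
    lyapunov_term_hasDerivWithinAt_le hK.ne' hC.le hγ.1 hα (hYl t ht)
  obtain ⟨Dr, hDr, hDr_le⟩ :=
    lyapunov_term_hasDerivWithinAt_le hK.ne' hC.le hγ.1 hα (hYr t ht)
  refine ⟨Dl + Dr, ?_, ?_⟩
  · simp only [hLt]
    exact hDl.add hDr
  · rw [hLt]
    linarith
end

section
/- Let c, L > 0. For every ε ∈ (0, c/L) there exists a unique α(ε) ∈ (0, ∞) satisfying sinh(L α(ε))/(L α(ε)) = c/(L ε). Moreover the map ε ↦ α(ε) is strictly decreasing on (0, c/L), α(ε) → +∞ as ε → 0⁺, and L α(ε)/ln(1/ε) → 1 as ε → 0⁺ (more precisely, L α(ε) = ln(1/ε) + O(ln(ln(1/ε))) as ε → 0⁺). -/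
/-!
On `[0, ∞)` the function `sinh` is strictly convex with `sinh 0 = 0`, so `sinh x / x`, the slope
of its chord from the origin, is strictly increasing on `(0, ∞)`; it tends to `1` at `0⁺` and to
`∞` at `∞`, hence has an inverse `φ : (1, ∞) → (0, ∞)`, and `α(ε) = φ(c / (L ε)) / L`.

For `x = L α(ε)` we have `sinh x = c α(ε) / ε`, and `2 sinh x = eˣ - e⁻ˣ` gives
`log (2 sinh x) < x ≤ log (3 sinh x)` as soon as `x ≥ 1`. Hence
`log (1/ε) ≤ x ≤ log (1/ε) + log (3c/L) + log x` for small `ε`; the upper bound forces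
`x ≤ 3 log (1/ε)` (via `log x ≤ x / 2`), so the `log x` term is `O(log log (1/ε))`.
-/

open Real Set Filter Topology Function

lemma strictConvexOn_sinh : StrictConvexOn ℝ (Ici 0) sinh :=
  strictConvexOn_of_deriv2_pos (convex_Ici 0) continuous_sinh.continuousOn fun x hx => by
    rw [interior_Ici] at hx
    simpa [Real.deriv_sinh, Real.deriv_cosh] using sinh_pos_iff.2 hx

lemma strictMonoOn_sinh_div_self : StrictMonoOn (fun x => sinh x / x) (Ioi 0) := by
  intro x hx y hy hxy
  simpa using strictConvexOn_sinh.secant_strict_mono_aux2 self_mem_Ici (mem_Ici.2 (le_of_lt hy)) hx hxy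

lemma tendsto_sinh_div_self_nhdsGT_zero : Tendsto (fun x => sinh x / x) (𝓝[>] 0) (𝓝 1) := by
  simpa [div_eq_inv_mul] using (hasDerivAt_sinh 0).tendsto_slope_zero_right

lemma add_sq_div_two_le_two_mul_sinh {x : ℝ} (hx : 0 ≤ x) : x + x ^ 2 / 2 ≤ 2 * sinh x := by
  rw [sinh_eq]
  linarith [quadratic_le_exp_of_nonneg hx, exp_le_one_iff.2 (neg_nonpos.2 hx)]

lemma exists_sinh_div_self_eq {t : ℝ} (ht : 1 < t) : ∃ x ∈ Ioi 0, sinh x / x = t := by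
  obtain ⟨a, hat, ha⟩ :=
    ((tendsto_sinh_div_self_nhdsGT_zero.eventually (gt_mem_nhds ht)).and
      self_mem_nhdsWithin).exists
  have ha : 0 < a := ha
  set b := a + 4 * t
  have hbt : t < sinh b / b := by
    rw [lt_div_iff₀ (by positivity)]
    nlinarith [add_sq_div_two_le_two_mul_sinh (x := b) (by positivity)]
  have hcont : ContinuousOn (fun x => sinh x / x) (Icc a b) :=
    continuous_sinh.continuousOn.div continuousOn_id fun x hx => (ha.trans_le hx.1).ne'
  obtain ⟨x, hx, hxt⟩ := intermediate_value_Ioo (by linarith) hcont ⟨hat, hbt⟩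
  exact ⟨x, ha.trans hx.1, hxt⟩

/-- Junk (a choice) for `t ≤ 1`. -/
noncomputable def sinhDivSelfInv (t : ℝ) : ℝ := invFunOn (fun x => sinh x / x) (Ioi 0) t

lemma sinhDivSelfInv_pos {t : ℝ} (ht : 1 < t) : 0 < sinhDivSelfInv t :=
  (invFunOn_pos (exists_sinh_div_self_eq ht)).1

lemma sinh_sinhDivSelfInv_div {t : ℝ} (ht : 1 < t) :
    sinh (sinhDivSelfInv t) / sinhDivSelfInv t = t :=
  (invFunOn_pos (exists_sinh_div_self_eq ht)).2

lemma eq_sinhDivSelfInv {t x : ℝ} (ht : 1 < t) (hx : 0 < x) (h : sinh x / x = t) :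
    x = sinhDivSelfInv t :=
  strictMonoOn_sinh_div_self.injOn hx (sinhDivSelfInv_pos ht) <| by
    simp only [h, sinh_sinhDivSelfInv_div ht]

lemma lt_sinhDivSelfInv {t x : ℝ} (ht : 1 < t) (hx : 0 < x) (h : sinh x / x < t) :
    x < sinhDivSelfInv t :=
  (strictMonoOn_sinh_div_self.lt_iff_lt hx (sinhDivSelfInv_pos ht)).1 <| by
    simpa only [sinh_sinhDivSelfInv_div ht] using h

lemma strictMonoOn_sinhDivSelfInv : StrictMonoOn sinhDivSelfInv (Ioi 1) := fun s hs t ht hst =>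
  lt_sinhDivSelfInv ht (sinhDivSelfInv_pos hs) (by rwa [sinh_sinhDivSelfInv_div hs])

lemma tendsto_sinhDivSelfInv_atTop : Tendsto sinhDivSelfInv atTop atTop := by
  refine tendsto_atTop.2 fun b => ?_
  have hb : 0 < max b 1 := by positivity
  have h1 : 1 < sinh (max b 1) / max b 1 := (one_lt_div hb).2 (self_lt_sinh_iff.2 hb)
  filter_upwards [eventually_gt_atTop (sinh (max b 1) / max b 1)] with t ht
  exact (le_max_left b 1).trans (lt_sinhDivSelfInv (h1.trans ht) hb ht).le

lemma log_two_mul_sinh_lt {x : ℝ} (hx : 0 < x) : log (2 * sinh x) < x := by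
  rw [log_lt_iff_lt_exp (by linarith [sinh_pos_iff.2 hx]), sinh_eq]
  linarith [exp_pos (-x)]

lemma le_log_three_mul_sinh {x : ℝ} (hx : 1 ≤ x) : x ≤ log (3 * sinh x) := by
  have hexp : 2 ≤ exp x := by linarith [add_one_le_exp x]
  have hinv : exp x * exp (-x) = 1 := by rw [← exp_add, add_neg_cancel, exp_zero]
  rw [le_log_iff_exp_le (by linarith [sinh_pos_iff.2 (zero_lt_one.trans_le hx)]), sinh_eq]
  nlinarith [exp_pos (-x)]

lemma log_le_half_self {x : ℝ} (hx : 0 < x) : log x ≤ x / 2 := by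
  have h := log_le_sub_one_of_pos (half_pos hx)
  rw [log_div hx.ne' two_ne_zero] at h
  linarith [log_two_lt_d9]

lemma abs_sub_le_mul_log_of_le_add_log {x ℓ K : ℝ} (hℓ : exp 1 ≤ ℓ) (hK : 2 * K ≤ ℓ)
    (hlow : ℓ ≤ x) (hup : x ≤ ℓ + K + log x) : |x - ℓ| ≤ (|K| + log 3 + 1) * log ℓ := by
  have hℓ0 : 0 < ℓ := (exp_pos 1).trans_le hℓ
  have hlogℓ : 1 ≤ log ℓ := (le_log_iff_exp_le hℓ0).2 hℓ
  have hx3 : x ≤ 3 * ℓ := by linarith [log_le_half_self (hℓ0.trans_le hlow)]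
  have hlogx : log x ≤ log 3 + log ℓ := by
    rw [← log_mul three_ne_zero hℓ0.ne']
    exact log_le_log (hℓ0.trans_le hlow) hx3
  rw [abs_of_nonneg (sub_nonneg.2 hlow)]
  nlinarith [le_abs_self K, abs_nonneg K, log_pos (by norm_num : (1 : ℝ) < 3)]

lemma tendsto_div_of_abs_sub_le_mul_log {ι : Type*} {l : Filter ι} {f g : ι → ℝ} {C : ℝ}
    (hC : 0 ≤ C) (hg : Tendsto g l atTop) (h : ∀ᶠ i in l, |f i - g i| ≤ C * log (g i)) :
    Tendsto (fun i => f i / g i) l (𝓝 1) := by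
  have hO : (fun i => f i - g i) =O[l] fun i => log (g i) :=
    Asymptotics.IsBigO.of_bound C <| h.mono fun i hi => by
      simpa only [norm_eq_abs] using hi.trans (mul_le_mul_of_nonneg_left (le_abs_self _) hC)
  have ho := hO.trans_isLittleO (isLittleO_log_id_atTop.comp_tendsto hg)
  refine (by simpa using ho.tendsto_div_nhds_zero.add_const 1 :
    Tendsto (fun i => (f i - g i) / g i + 1) l (𝓝 1)).congr' ?_
  filter_upwards [hg.eventually_ne_atTop 0] with i hi
  field_simp
  ring

section
variable {c L : ℝ}

noncomputable def alpha (c L ε : ℝ) : ℝ := sinhDivSelfInv (c / (L * ε)) / L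

lemma one_lt_div_mul_of_mem_Ioo (hL : 0 < L) {ε : ℝ} (hε : ε ∈ Ioo 0 (c / L)) :
    1 < c / (L * ε) := by
  rw [one_lt_div (mul_pos hL hε.1), ← lt_div_iff₀' hL]
  exact hε.2

lemma tendsto_div_mul_nhdsGT_zero (hc : 0 < c) (hL : 0 < L) :
    Tendsto (fun ε => c / (L * ε)) (𝓝[>] 0) atTop :=
  (tendsto_inv_nhdsGT_zero.const_mul_atTop (div_pos hc hL)).congr fun ε => by ring

lemma mul_alpha (hL : 0 < L) (ε : ℝ) : L * alpha c L ε = sinhDivSelfInv (c / (L * ε)) :=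
  mul_div_cancel₀ _ hL.ne'

lemma alpha_spec (hL : 0 < L) {ε : ℝ} (hε : ε ∈ Ioo 0 (c / L)) :
    0 < alpha c L ε ∧ sinh (L * alpha c L ε) / (L * alpha c L ε) = c / (L * ε) ∧
      ∀ β, 0 < β → sinh (L * β) / (L * β) = c / (L * ε) → β = alpha c L ε := by
  have ht := one_lt_div_mul_of_mem_Ioo hL hε
  refine ⟨div_pos (sinhDivSelfInv_pos ht) hL, ?_, fun β hβ h => ?_⟩
  · rw [mul_alpha hL, sinh_sinhDivSelfInv_div ht]
  · apply mul_left_cancel₀ hL.ne'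
    rw [mul_alpha hL]
    exact eq_sinhDivSelfInv ht (mul_pos hL hβ) h

lemma strictAntiOn_alpha (hc : 0 < c) (hL : 0 < L) : StrictAntiOn (alpha c L) (Ioo 0 (c / L)) :=
  fun ε hε δ hδ hεδ => by
    refine div_lt_div_of_pos_right ?_ hL
    exact strictMonoOn_sinhDivSelfInv (one_lt_div_mul_of_mem_Ioo hL hδ)
      (one_lt_div_mul_of_mem_Ioo hL hε)
      (div_lt_div_of_pos_left hc (mul_pos hL hε.1) (mul_lt_mul_of_pos_left hεδ hL))

lemma tendsto_alpha_atTop (hc : 0 < c) (hL : 0 < L) :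
    Tendsto (alpha c L) (𝓝[>] 0) atTop :=
  (tendsto_sinhDivSelfInv_atTop.comp (tendsto_div_mul_nhdsGT_zero hc hL)).atTop_div_const hL

lemma sinh_mul_alpha (hL : 0 < L) {ε : ℝ} (hε : ε ∈ Ioo 0 (c / L)) :
    sinh (L * alpha c L ε) = c * alpha c L ε / ε := by
  have h := (alpha_spec hL hε).2.1
  rw [div_eq_iff (mul_pos hL (alpha_spec hL hε).1).ne'] at h
  rw [h]
  field_simp [hL.ne', hε.1.ne']

lemma eventually_abs_mul_alpha_sub_log_le (hc : 0 < c) (hL : 0 < L) :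
    ∀ᶠ ε in 𝓝[>] 0, |L * alpha c L ε - log ε⁻¹| ≤
      (|log (3 * c / L)| + log 3 + 1) * log (log ε⁻¹) := by
  have hℓ : Tendsto (fun ε : ℝ => log ε⁻¹) (𝓝[>] 0) atTop :=
    tendsto_log_atTop.comp tendsto_inv_nhdsGT_zero
  filter_upwards [Ioo_mem_nhdsGT (div_pos hc hL), hℓ.eventually_ge_atTop (exp 1),
    hℓ.eventually_ge_atTop (2 * log (3 * c / L)),
    (tendsto_alpha_atTop hc hL).eventually_ge_atTop (max (1 / (2 * c)) (1 / L))]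
    with ε hε hℓe hℓK hα
  have hε₀ := hε.1
  have hα₀ := (alpha_spec hL hε).1
  have hsinh := sinh_mul_alpha hL hε
  have hx : 1 ≤ L * alpha c L ε := by
    have := (le_max_right _ _).trans hα
    rwa [div_le_iff₀' hL] at this
  have hcα : 1 ≤ 2 * c * alpha c L ε := by
    have := (le_max_left _ _).trans hα
    rwa [div_le_iff₀' (by positivity)] at this
  apply abs_sub_le_mul_log_of_le_add_log hℓe hℓK
  · calc log ε⁻¹ ≤ log (2 * sinh (L * alpha c L ε)) := by
          refine log_le_log (inv_pos.2 hε.1) ?_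
          rw [hsinh, ← mul_div_assoc, ← mul_assoc, div_eq_mul_inv]
          exact le_mul_of_one_le_left (inv_pos.2 hε.1).le hcα
      _ ≤ L * alpha c L ε := (log_two_mul_sinh_lt (by positivity)).le
  · calc L * alpha c L ε ≤ log (3 * sinh (L * alpha c L ε)) := le_log_three_mul_sinh hx
      _ = log ε⁻¹ + log (3 * c / L) + log (L * alpha c L ε) := by
          rw [← log_mul (by positivity) (by positivity), ← log_mul (by positivity) (by positivity),
            hsinh]
          congr 1
          field_simp [hL.ne', hε.1.ne']
end

/-- For `c, L > 0` and every `ε ∈ (0, c/L)` there is a unique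
`α(ε) > 0` with `sinh(Lα(ε))/(Lα(ε)) = c/(Lε)`; the map `ε ↦ α(ε)` is strictly
decreasing on `(0, c/L)`, `α(ε) → ∞` as `ε → 0⁺`, and
`L α(ε) = ln(1/ε) + O(ln(ln(1/ε)))` as `ε → 0⁺`; in particular
`L α(ε)/ln(1/ε) → 1` as `ε → 0⁺`. -/
theorem stmt19 (c L : ℝ) (hc : 0 < c) (hL : 0 < L) :
    ∃ α : ℝ → ℝ,
      (∀ ε ∈ Set.Ioo (0:ℝ) (c / L),
        0 < α ε ∧ Real.sinh (L * α ε) / (L * α ε) = c / (L * ε) ∧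
        (∀ β : ℝ, 0 < β → Real.sinh (L * β) / (L * β) = c / (L * ε) → β = α ε)) ∧
      StrictAntiOn α (Set.Ioo (0:ℝ) (c / L)) ∧
      Filter.Tendsto α (nhdsWithin 0 (Set.Ioi 0)) Filter.atTop ∧
      (∃ C ε₁ : ℝ, 0 < C ∧ 0 < ε₁ ∧ ∀ ε ∈ Set.Ioo (0:ℝ) ε₁,
        |L * α ε - Real.log ε⁻¹| ≤ C * Real.log (Real.log ε⁻¹)) ∧
      Filter.Tendsto (fun ε => L * α ε / Real.log ε⁻¹)
        (nhdsWithin 0 (Set.Ioi 0)) (nhds 1) := by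
  have hbound := eventually_abs_mul_alpha_sub_log_le hc hL
  obtain ⟨ε₁, hε₁, hsub⟩ := mem_nhdsGT_iff_exists_Ioo_subset.1 hbound
  refine ⟨alpha c L, fun ε hε => alpha_spec hL hε, strictAntiOn_alpha hc hL,
    tendsto_alpha_atTop hc hL, ⟨_, ε₁, by positivity, hε₁, fun ε hε => hsub hε⟩, ?_⟩
  exact tendsto_div_of_abs_sub_le_mul_log (by positivity)
    (tendsto_log_atTop.comp tendsto_inv_nhdsGT_zero) hbound
end
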